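/- arXiv:2411.15935 — 12 statements merged into one kernel-verified Lean document; each statement's English description precedes it below -/
import Mathlib

section
/- Let T = Σ_{i=1}^r x^{(i)} where each x^{(i)} = x_1^{(i)} ⊗ ⋯ ⊗ x_d^{(i)} is a nonzero rank-one tensor in ℝ^{n_1} ⊗ ⋯ ⊗ ℝ^{n_d}. Then this decomposition is two-orthogonal if and only if for every j ∈ {1,…,r} and every subset I ⊆ {1,…,r}\{j}, the tensor x^{(j)} is a critical rank-one approximation of T − Σ_{i∈I} x^{(i)}. -/
/-- Frobenius/Euclidean inner product of real arrays indexed by a finite type. -/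
def fdot {ι : Type*} [Fintype ι] (u v : ι → ℝ) : ℝ := ∑ a, u a * v a

/-- The rank-one tensor `v₁ ⊗ ⋯ ⊗ v_d`, as an array. -/
def tensProd {d : ℕ} {n : Fin d → ℕ} (v : (k : Fin d) → Fin (n k) → ℝ) :
    ((k : Fin d) → Fin (n k)) → ℝ :=
  fun i => ∏ k, v k (i k)

/-- Replace the `k`-th factor of a tuple of vectors by `v`. -/
def updFactor {d : ℕ} {n : Fin d → ℕ} (x : (k : Fin d) → Fin (n k) → ℝ)
    (k : Fin d) (v : Fin (n k) → ℝ) : (k' : Fin d) → Fin (n k') → ℝ :=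
  @Function.update (Fin d) (fun k' => Fin (n k') → ℝ) _ x k v


/-!
The inner product of `x⁽ⁱ⁾` with the tangent vector `x₁⁽ʲ⁾ ⊗ ⋯ ⊗ v ⊗ ⋯ ⊗ x_d⁽ʲ⁾` factors as
`(∏_{k' ≠ k} ⟨x_{k'}⁽ⁱ⁾, x_{k'}⁽ʲ⁾⟩) ⟨x_k⁽ⁱ⁾, v⟩`. Hence a nonzero `x⁽ⁱ⁾` is orthogonal to all
such tangent vectors, for every slot `k`, exactly when for each `k` some factor `k' ≠ k` is
orthogonal (take `v = x_k⁽ⁱ⁾`), i.e. when `x⁽ⁱ⁾` and `x⁽ʲ⁾` are orthogonal in two factors.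
The residual `T − Σ_{i ∈ I} x⁽ⁱ⁾ − x⁽ʲ⁾` is the sum of the `x⁽ⁱ⁾` with `i ∉ I ∪ {j}`; this
gives one direction, and choosing `I` so that the residual is a single `x⁽ⁱ⁾` gives the other.
-/

open Finset

lemma exists_ne_and_and_iff_forall_exists_ne {α : Type*} [Nonempty α] (P : α → Prop) :
    (∃ a b, a ≠ b ∧ P a ∧ P b) ↔ ∀ c, ∃ a, a ≠ c ∧ P a := by
  constructor
  · rintro ⟨a, b, hab, ha, hb⟩ c
    by_cases hac : a = c
    · exact ⟨b, hac ▸ hab.symm, hb⟩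
    · exact ⟨a, hac, ha⟩
  · intro h
    obtain ⟨a, -, ha⟩ := h (Classical.arbitrary α)
    obtain ⟨b, hba, hb⟩ := h a
    exact ⟨b, a, hba, hb, ha⟩

lemma sum_sub_sum_sub_eq_sum_erase {ι M : Type*} [Fintype ι] [DecidableEq ι] [AddCommGroup M]
    (f : ι → M) {I : Finset ι} {j : ι} (hj : j ∉ I) :
    (∑ i, f i - ∑ i ∈ I, f i) - f j = ∑ i ∈ (univ \ I).erase j, f i := by
  rw [← sum_sdiff_eq_sub (subset_univ I), ← add_sum_erase _ _ (by simpa using hj : j ∈ univ \ I),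
    add_sub_cancel_left]

section Tensor

variable {d : ℕ} {n : Fin d → ℕ}

lemma fdot_eq_dotProduct {ι : Type*} [Fintype ι] (u v : ι → ℝ) : fdot u v = dotProduct u v :=
  rfl

lemma fdot_tensProd (u v : (k : Fin d) → Fin (n k) → ℝ) :
    fdot (tensProd u) (tensProd v) = ∏ k, fdot (u k) (v k) := by
  unfold fdot tensProd
  rw [prod_univ_sum, Fintype.piFinset_univ]
  exact sum_congr rfl fun i _ => prod_mul_distrib.symm

lemma ne_zero_of_tensProd_ne_zero {u : (k : Fin d) → Fin (n k) → ℝ} (hu : tensProd u ≠ 0)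
    (k : Fin d) : u k ≠ 0 := by
  rintro hk
  exact hu (funext fun i => prod_eq_zero (mem_univ k) (by simp [hk]))

lemma fdot_tensProd_updFactor (u w : (k : Fin d) → Fin (n k) → ℝ) (k : Fin d)
    (v : Fin (n k) → ℝ) :
    fdot (tensProd u) (tensProd (updFactor w k v)) =
      (∏ k' ∈ univ.erase k, fdot (u k') (w k')) * fdot (u k) v := by
  rw [fdot_tensProd, ← prod_erase_mul _ _ (mem_univ k)]
  congr 1
  · exact prod_congr rfl fun k' hk' => by
      rw [updFactor, Function.update_of_ne (ne_of_mem_erase hk')]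
  · rw [updFactor, Function.update_self]

lemma fdot_tensProd_updFactor_eq_zero_iff {u w : (k : Fin d) → Fin (n k) → ℝ}
    (hu : tensProd u ≠ 0) :
    (∀ k v, fdot (tensProd u) (tensProd (updFactor w k v)) = 0) ↔
      ∀ k, ∃ k', k' ≠ k ∧ fdot (u k') (w k') = 0 := by
  refine forall_congr' fun k => ?_
  have hk : fdot (u k) (u k) ≠ 0 := by
    rw [fdot_eq_dotProduct, Ne, dotProduct_self_eq_zero]
    exact ne_zero_of_tensProd_ne_zero hu k
  calc (∀ v, fdot (tensProd u) (tensProd (updFactor w k v)) = 0)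
      ↔ ∏ k' ∈ univ.erase k, fdot (u k') (w k') = 0 := by
        simp only [fdot_tensProd_updFactor]
        exact ⟨fun h => (mul_eq_zero.mp (h (u k))).resolve_right hk,
          fun h v => by rw [h, zero_mul]⟩
    _ ↔ ∃ k', k' ≠ k ∧ fdot (u k') (w k') = 0 := by simp [prod_eq_zero_iff]

end Tensor

theorem stmt0_general (d : ℕ) (hd : 2 ≤ d) (n : Fin d → ℕ)
    (r : ℕ)
    (x : Fin r → (k : Fin d) → Fin (n k) → ℝ)
    (hx : ∀ i, tensProd (x i) ≠ 0)
    (T : ((k : Fin d) → Fin (n k)) → ℝ)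
    (hT : T = ∑ i, tensProd (x i)) :
    (∀ i j : Fin r, i ≠ j → ∃ k₁ k₂ : Fin d, k₁ ≠ k₂ ∧
        fdot (x i k₁) (x j k₁) = 0 ∧ fdot (x i k₂) (x j k₂) = 0)
    ↔
    (∀ j : Fin r, ∀ I : Finset (Fin r), j ∉ I →
      ∀ (k : Fin d) (v : Fin (n k) → ℝ),
        fdot ((T - ∑ i ∈ I, tensProd (x i)) - tensProd (x j))
          (tensProd (updFactor (x j) k v)) = 0) := by
  have : Nonempty (Fin d) := ⟨⟨0, by omega⟩⟩
  simp only [exists_ne_and_and_iff_forall_exists_ne (fun k => fdot (x _ k) (x _ k) = 0),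
    ← fdot_tensProd_updFactor_eq_zero_iff (hx _)]
  subst hT
  constructor
  · intro h j I hj k v
    rw [sum_sub_sum_sub_eq_sum_erase _ hj, fdot_eq_dotProduct, sum_dotProduct]
    exact sum_eq_zero fun i hi => h i j (ne_of_mem_erase hi) k v
  · intro h i j hij k v
    have hj : j ∉ univ \ {i, j} := by simp
    have hres : (univ \ (univ \ {i, j})).erase j = {i} := by
      rw [Finset.sdiff_sdiff_eq_self (subset_univ _), pair_comm,
        erase_insert (by simpa using hij.symm)]
    have hcrit := h j _ hj k v
    rwa [sum_sub_sum_sub_eq_sum_erase _ hj, hres, sum_singleton] at hcrit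

/-- A decomposition `T = Σᵢ x⁽ⁱ⁾` into nonzero rank-one tensors is two-orthogonal
if and only if each `x⁽ʲ⁾` is a critical rank-one approximation of
`T − Σ_{i ∈ I} x⁽ⁱ⁾` for every subset `I ⊆ {1,…,r} \ {j}`. -/
theorem stmt0 (d : ℕ) (hd : 2 ≤ d) (n : Fin d → ℕ) (hn : ∀ k, 2 ≤ n k)
    (r : ℕ) (hr : 1 ≤ r)
    (x : Fin r → (k : Fin d) → Fin (n k) → ℝ)
    (hx : ∀ i, tensProd (x i) ≠ 0)
    (T : ((k : Fin d) → Fin (n k)) → ℝ)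
    (hT : T = ∑ i, tensProd (x i)) :
    (∀ i j : Fin r, i ≠ j → ∃ k₁ k₂ : Fin d, k₁ ≠ k₂ ∧
        fdot (x i k₁) (x j k₁) = 0 ∧ fdot (x i k₂) (x j k₂) = 0)
    ↔
    (∀ j : Fin r, ∀ I : Finset (Fin r), j ∉ I →
      ∀ (k : Fin d) (v : Fin (n k) → ℝ),
        fdot ((T - ∑ i ∈ I, tensProd (x i)) - tensProd (x j))
          (tensProd (updFactor (x j) k v)) = 0) :=
  stmt0_general d hd n r x hx T hT
end

section
/- Fix a tensor T ∈ ℝ^{n_1} ⊗ ⋯ ⊗ ℝ^{n_d}. Let (x^{(j)})_{j≥1} be a sequence of rank-one tensors such that for each j, x^{(j)} is a best rank-one approximation of T − Σ_{i<j} x^{(i)}, i.e. x^{(j)} minimizes ‖(T − Σ_{i<j} x^{(i)}) − y‖ over all rank-one tensors y. Then the partial sums Σ_{i=1}^n x^{(i)} converge to T as n → ∞; equivalently, ‖T − Σ_{i=1}^n x^{(i)}‖ → 0. -/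
/-- Frobenius norm. -/
noncomputable def fnorm {ι : Type*} [Fintype ι] (u : ι → ℝ) : ℝ := Real.sqrt (fdot u u)

/-!
Removing the largest entry of an array `R` is a rank-one correction that lowers `‖R‖²` by at
least `‖R‖² / N`, where `N` is the number of entries. A best rank-one correction does at least as
well, so the residual norms decay geometrically with ratio `√(1 - 1/N)`.
-/

open Filter Topology

section Frobenius

variable {ι : Type*} [Fintype ι]

lemma fdot_self_eq_sum_sq (u : ι → ℝ) : fdot u u = ∑ a, u a ^ 2 := by
  simp only [fdot, sq]

lemma fdot_sub_single_self [DecidableEq ι] (R : ι → ℝ) (i : ι) :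
    fdot (R - Pi.single i (R i)) (R - Pi.single i (R i)) = fdot R R - R i ^ 2 := by
  rw [fdot_self_eq_sum_sq, fdot_self_eq_sum_sq, ← Finset.add_sum_erase _ _ (Finset.mem_univ i),
    ← Finset.add_sum_erase _ _ (Finset.mem_univ i)]
  have off_i : ∀ a ∈ Finset.univ.erase i, (R - Pi.single i (R i) : ι → ℝ) a ^ 2 = R a ^ 2 :=
    fun a ha => by rw [Pi.sub_apply, Pi.single_eq_of_ne (Finset.ne_of_mem_erase ha), sub_zero]
  rw [Finset.sum_congr rfl off_i]
  simp

lemma exists_fdot_self_le_card_mul_sq [Nonempty ι] (R : ι → ℝ) :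
    ∃ i, fdot R R ≤ Fintype.card ι * R i ^ 2 := by
  obtain ⟨i, -, hi⟩ := Finset.univ.exists_max_image (fun a => R a ^ 2) Finset.univ_nonempty
  refine ⟨i, ?_⟩
  rw [fdot_self_eq_sum_sq, ← nsmul_eq_mul]
  exact Finset.sum_le_card_nsmul _ _ _ hi

lemma exists_fnorm_sub_single_le [DecidableEq ι] [Nonempty ι] (R : ι → ℝ) :
    ∃ i, fnorm (R - Pi.single i (R i)) ≤ √(1 - 1 / Fintype.card ι) * fnorm R := by
  obtain ⟨i, hi⟩ := exists_fdot_self_le_card_mul_sq R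
  have card_pos : (0 : ℝ) < Fintype.card ι := by exact_mod_cast Fintype.card_pos
  have hR : 0 ≤ fdot R R := by rw [fdot_self_eq_sum_sq]; positivity
  refine ⟨i, ?_⟩
  rw [fnorm, fnorm, ← Real.sqrt_mul' _ hR, fdot_sub_single_self]
  refine Real.sqrt_le_sqrt ?_
  have : fdot R R / Fintype.card ι ≤ R i ^ 2 := by rwa [div_le_iff₀' card_pos]
  rw [sub_mul, one_mul, one_div_mul_eq_div]
  linarith

end Frobenius

lemma exists_tensProd_eq_single {d : ℕ} {n : Fin d → ℕ} (k₀ : Fin d) (i : (k : Fin d) → Fin (n k))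
    (c : ℝ) : ∃ v : (k : Fin d) → Fin (n k) → ℝ, tensProd v = Pi.single i c := by
  refine ⟨fun k j => (if k = k₀ then c else 1) * (if j = i k then 1 else 0), funext fun a => ?_⟩
  rw [tensProd, Finset.prod_mul_distrib, Fintype.prod_ite_eq', Fintype.prod_boole,
    Pi.single_apply]
  simp only [← funext_iff]
  split_ifs <;> simp

lemma tendsto_zero_of_le_mul_succ {u : ℕ → ℝ} {c : ℝ} (hu : ∀ m, 0 ≤ u m) (hc₀ : 0 ≤ c)
    (hc₁ : c < 1) (h : ∀ m, u (m + 1) ≤ c * u m) : Tendsto u atTop (𝓝 0) :=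
  squeeze_zero hu (fun m => le_geom hc₀ m fun k _ => h k)
    (by simpa using (tendsto_pow_atTop_nhds_zero_of_lt_one hc₀ hc₁).mul_const (u 0))

theorem stmt4_general (d : ℕ) (hd : 2 ≤ d) (n : Fin d → ℕ) (hn : ∀ k, 2 ≤ n k)
    (T : ((k : Fin d) → Fin (n k)) → ℝ)
    (x : ℕ → ((k : Fin d) → Fin (n k)) → ℝ)
    (hbest : ∀ (j : ℕ) (v : (k : Fin d) → Fin (n k) → ℝ),
      fnorm ((T - ∑ i ∈ Finset.range j, x i) - x j)
        ≤ fnorm ((T - ∑ i ∈ Finset.range j, x i) - tensProd v)) :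
    Filter.Tendsto (fun m : ℕ => fnorm (T - ∑ i ∈ Finset.range m, x i))
      Filter.atTop (nhds 0) := by
  have : Nonempty ((k : Fin d) → Fin (n k)) := ⟨fun k => ⟨0, by linarith [hn k]⟩⟩
  set N : ℝ := (Fintype.card ((k : Fin d) → Fin (n k)) : ℝ)
  have hN : 0 < N := Nat.cast_pos.mpr Fintype.card_pos
  have ratio_lt_one : √(1 - 1 / N) < 1 :=
    (Real.sqrt_lt' one_pos).mpr (by rw [one_pow]; linarith [one_div_pos.mpr hN])
  refine tendsto_zero_of_le_mul_succ (fun m => Real.sqrt_nonneg _) (Real.sqrt_nonneg _)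
    ratio_lt_one fun m => ?_
  set R := T - ∑ i ∈ Finset.range m, x i
  obtain ⟨i, hi⟩ := exists_fnorm_sub_single_le R
  obtain ⟨v, hv⟩ := exists_tensProd_eq_single ⟨0, by omega⟩ i (R i)
  calc fnorm (T - ∑ i ∈ Finset.range (m + 1), x i) = fnorm (R - x m) := by
        rw [Finset.sum_range_succ, ← sub_sub]
    _ ≤ fnorm (R - tensProd v) := hbest m v
    _ ≤ _ := hv ▸ hi

/-- If each `x⁽ʲ⁾` is a best rank-one approximation of `T − Σ_{i<j} x⁽ⁱ⁾`, then the
partial sums `Σ_{i≤m} x⁽ⁱ⁾` converge to `T`, i.e. `‖T − Σ_{i≤m} x⁽ⁱ⁾‖ → 0`. -/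
theorem stmt4 (d : ℕ) (hd : 2 ≤ d) (n : Fin d → ℕ) (hn : ∀ k, 2 ≤ n k)
    (T : ((k : Fin d) → Fin (n k)) → ℝ)
    (x : ℕ → ((k : Fin d) → Fin (n k)) → ℝ)
    (hrank : ∀ j, ∃ v : (k : Fin d) → Fin (n k) → ℝ, x j = tensProd v)
    (hbest : ∀ (j : ℕ) (v : (k : Fin d) → Fin (n k) → ℝ),
      fnorm ((T - ∑ i ∈ Finset.range j, x i) - x j)
        ≤ fnorm ((T - ∑ i ∈ Finset.range j, x i) - tensProd v)) :
    Filter.Tendsto (fun m : ℕ => fnorm (T - ∑ i ∈ Finset.range m, x i))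
      Filter.atTop (nhds 0) :=
  stmt4_general d hd n hn T x hbest
end

section
/- Let d ≥ 2, let e_1,…,e_n be the standard basis of ℝ^n, let 1 ≤ r ≤ n, and let λ_1,…,λ_r be nonzero real numbers. Then the odeco tensor T = Σ_{i=1}^r λ_i e_i^{⊗d} ∈ (ℝ^n)^{⊗d} has border rank exactly r: T has rank at most r, and T does not lie in the Euclidean closure of the set of tensors of rank at most r − 1. In particular, T has rank exactly r. -/
/-!
Flattening a tensor along its first factor is linear and sends rank-one tensors to rank-one
matrices, so it sends tensors of rank at most `r - 1` to matrices of rank at most `r - 1`. Their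
`r × r` minors vanish, and this closed condition persists on the closure. For the odeco tensor,
the `r × r` minor with rows `e₁, …, e_r` and columns `e₁^{⊗(d-1)}, …, e_r^{⊗(d-1)}` is `diag(λ)`.
-/

/-- The rank-one tensor `v₁ ⊗ ⋯ ⊗ v_d` in `(ℝ^n)^{⊗d}`, as an array. -/
def tensProdC {d n : ℕ} (v : Fin d → Fin n → ℝ) : (Fin d → Fin n) → ℝ :=
  fun i => ∏ k, v k (i k)

/-- `T` has (tensor) rank at most `r`. -/
def rankLE {d n : ℕ} (T : (Fin d → Fin n) → ℝ) (r : ℕ) : Prop :=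
  ∃ v : Fin r → Fin d → Fin n → ℝ, T = ∑ i, tensProdC (v i)

open Finset Matrix Function

theorem tensProdC_update_zero_const {d n : ℕ} [NeZero d] (v : Fin d → Fin n → ℝ) (a b : Fin n) :
    tensProdC v (update (fun _ => b) 0 a) = v 0 a * ∏ k ∈ univ.erase 0, v k b := by
  rw [tensProdC, ← mul_prod_erase univ _ (mem_univ 0), update_self]
  congr 1
  exact prod_congr rfl fun k hk => by rw [update_of_ne (ne_of_mem_erase hk)]

theorem smul_tensProdC {d n : ℕ} [NeZero d] (c : ℝ) (v : Fin d → Fin n → ℝ) :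
    c • tensProdC v = tensProdC (update v 0 (c • v 0)) := by
  funext x
  simp only [tensProdC, Pi.smul_apply, smul_eq_mul]
  rw [← mul_prod_erase univ _ (mem_univ 0), ← mul_prod_erase univ _ (mem_univ 0), update_self,
    Pi.smul_apply, smul_eq_mul, mul_assoc]
  congr 2
  exact prod_congr rfl fun k hk => by rw [update_of_ne (ne_of_mem_erase hk)]

theorem rankLE_sum_smul_tensProdC {d n r : ℕ} [NeZero d] (c : Fin r → ℝ)
    (v : Fin r → Fin d → Fin n → ℝ) : rankLE (∑ i, c i • tensProdC (v i)) r :=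
  ⟨fun i => update (v i) 0 (c i • v i 0), by simp only [smul_tensProdC]⟩

theorem tensProdC_const_single {d n : ℕ} (a : Fin n) (x : Fin d → Fin n) :
    tensProdC (fun _ => Pi.single a 1) x = if x = fun _ => a then 1 else 0 := by
  simp only [tensProdC, Pi.single_apply, funext_iff]
  convert Fintype.prod_boole

theorem update_const_eq_const_iff {α β : Type*} [DecidableEq α] [Nontrivial α] {i : α}
    {a b c : β} : update (fun _ => b) i a = (fun _ => c) ↔ a = c ∧ b = c := by
  obtain ⟨j, hj⟩ := exists_ne i
  rw [update_eq_iff]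
  exact ⟨fun h => ⟨h.1, h.2 j hj⟩, fun h => ⟨h.1, fun _ _ => h.2⟩⟩

theorem rank_sum_vecMulVec_le {R ι : Type*} [CommSemiring R] [StrongRankCondition R] [Fintype ι]
    {m : ℕ} (u w : Fin m → ι → R) :
    (∑ t, vecMulVec (u t) (w t)).rank ≤ m := by
  have hfactor : ∑ t, vecMulVec (u t) (w t) = (of fun i t => u t i) * of fun t j => w t j := by
    ext i j
    simp [Matrix.mul_apply, vecMulVec_apply, Matrix.sum_apply]
  rw [hfactor]
  exact (rank_mul_le_left _ _).trans ((rank_le_card_width _).trans (Fintype.card_fin m).le)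

theorem det_eq_zero_of_rank_lt {R ι : Type*} [CommRing R] [IsDomain R] [Fintype ι]
    [DecidableEq ι] {A : Matrix ι ι R} (h : A.rank < Fintype.card ι) : A.det = 0 := by
  by_contra hA
  exact h.ne (rank_of_det_ne_zero hA)

section Flattening

variable {d n : ℕ} [NeZero d] {ι : Type*}

/-- The `ι × ι` submatrix of the flattening `(ℝⁿ)^{⊗d} → ℝⁿ ⊗ (ℝⁿ)^{⊗(d-1)}` with rows `p` and
columns at the diagonal multi-indices `(q j, …, q j)`. -/
def flattening (p q : ι → Fin n) : ((Fin d → Fin n) → ℝ) →ₗ[ℝ] Matrix ι ι ℝ where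
  toFun S := of fun i j => S (update (fun _ => q j) 0 (p i))
  map_add' _ _ := rfl
  map_smul' _ _ := rfl

@[simp]
theorem flattening_apply (p q : ι → Fin n) (S : (Fin d → Fin n) → ℝ) (i j : ι) :
    flattening p q S i j = S (update (fun _ => q j) 0 (p i)) :=
  rfl

theorem flattening_tensProdC (p q : ι → Fin n) (v : Fin d → Fin n → ℝ) :
    flattening p q (tensProdC v) =
      vecMulVec (fun i => v 0 (p i)) (fun j => ∏ k ∈ univ.erase 0, v k (q j)) := by
  ext i j
  exact tensProdC_update_zero_const v (p i) (q j)

theorem rank_flattening_le_of_rankLE [Fintype ι] (p q : ι → Fin n)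
    {S : (Fin d → Fin n) → ℝ} {m : ℕ} (hS : rankLE S m) : (flattening p q S).rank ≤ m := by
  obtain ⟨v, rfl⟩ := hS
  simpa only [map_sum, flattening_tensProdC] using rank_sum_vecMulVec_le _ _

theorem det_flattening_eq_zero_of_mem_closure [Fintype ι] [DecidableEq ι] (p q : ι → Fin n)
    {m : ℕ} (hm : m < Fintype.card ι) {S : (Fin d → Fin n) → ℝ}
    (hS : S ∈ closure {S | rankLE S m}) : (flattening p q S).det = 0 := by
  have hclosed : IsClosed {S : (Fin d → Fin n) → ℝ | (flattening p q S).det = 0} :=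
    isClosed_eq ((flattening p q).continuous_of_finiteDimensional.matrix_det) continuous_const
  refine closure_minimal (fun S hS => ?_) hclosed hS
  exact det_eq_zero_of_rank_lt ((rank_flattening_le_of_rankLE p q hS).trans_lt hm)

theorem flattening_sum_smul_tensProdC_single [Nontrivial (Fin d)] [Fintype ι] [DecidableEq ι]
    {c : ι → Fin n} (hc : Injective c) (lam : ι → ℝ) :
    flattening c c (∑ t, lam t • tensProdC (fun _ : Fin d => Pi.single (c t) (1 : ℝ))) =
      diagonal lam := by
  ext i j
  rw [map_sum, Matrix.sum_apply, diagonal_apply]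
  simp_rw [map_smul, Matrix.smul_apply, flattening_apply, tensProdC_const_single,
    update_const_eq_const_iff, hc.eq_iff, smul_eq_mul, mul_ite, mul_one, mul_zero]
  split_ifs with hij
  · subst hij
    simp
  · exact sum_eq_zero fun t _ => if_neg fun h => hij (h.1.trans h.2.symm)

end Flattening

theorem stmt7_general (d n : ℕ) (hd : 2 ≤ d)
    (r : ℕ) (hr : 1 ≤ r) (hrn : r ≤ n)
    (lam : Fin r → ℝ) (hlam : ∀ i, lam i ≠ 0)
    (T : (Fin d → Fin n) → ℝ)
    (hT : T = ∑ i : Fin r,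
      lam i • tensProdC (fun _ : Fin d => Pi.single (Fin.castLE hrn i) (1 : ℝ))) :
    rankLE T r ∧
    T ∉ closure {S : (Fin d → Fin n) → ℝ | rankLE S (r - 1)} ∧
    ¬ rankLE T (r - 1) := by
  have : NeZero d := ⟨by omega⟩
  have : Nontrivial (Fin d) := Fin.nontrivial_iff_two_le.2 hd
  have hflat : flattening (Fin.castLE hrn) (Fin.castLE hrn) T = diagonal lam := by
    rw [hT]
    exact flattening_sum_smul_tensProdC_single (Fin.castLE_injective hrn) lam
  have hdet : (flattening (Fin.castLE hrn) (Fin.castLE hrn) T).det ≠ 0 := by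
    rw [hflat, det_diagonal]
    exact prod_ne_zero_iff.2 fun i _ => hlam i
  have hclosure : T ∉ closure {S : (Fin d → Fin n) → ℝ | rankLE S (r - 1)} := fun hmem =>
    hdet (det_flattening_eq_zero_of_mem_closure _ _ (by rw [Fintype.card_fin]; omega) hmem)
  exact ⟨hT ▸ rankLE_sum_smul_tensProdC _ _, hclosure, fun h => hclosure (subset_closure h)⟩

/-- The odeco tensor `T = Σ_{i=1}^r λᵢ eᵢ^{⊗d}` with all `λᵢ ≠ 0` and `r ≤ n` has
border rank exactly `r`: it has rank at most `r` and does not lie in the closure of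
the set of tensors of rank at most `r − 1`. In particular its rank is exactly `r`. -/
theorem stmt7 (d n : ℕ) (hd : 2 ≤ d) (hn : 2 ≤ n)
    (r : ℕ) (hr : 1 ≤ r) (hrn : r ≤ n)
    (lam : Fin r → ℝ) (hlam : ∀ i, lam i ≠ 0)
    (T : (Fin d → Fin n) → ℝ)
    (hT : T = ∑ i : Fin r,
      lam i • tensProdC (fun _ : Fin d => Pi.single (Fin.castLE hrn i) (1 : ℝ))) :
    rankLE T r ∧
    T ∉ closure {S : (Fin d → Fin n) → ℝ | rankLE S (r - 1)} ∧
    ¬ rankLE T (r - 1) :=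
  stmt7_general d n hd r hr hrn lam hlam T hT
end

section
/- Let e_1, e_2, e_3 be the standard basis of ℝ³ and let T = e_1 ⊗ e_1 ⊗ e_1 + e_1 ⊗ e_2 ⊗ e_2 + e_1 ⊗ e_3 ⊗ e_3 + e_2 ⊗ e_1 ⊗ e_2 + e_3 ⊗ e_1 ⊗ e_3 ∈ (ℝ³)^{⊗3}. Then T has rank exactly 5: T is a sum of 5 rank-one tensors and is not a sum of 4 rank-one tensors. -/
/-!
Contracting `T` in its first factor with `μ` gives the matrix
`!![μ 0, μ 1, μ 2; 0, μ 0, 0; 0, 0, μ 0]`, invertible as soon as `μ 0 ≠ 0`, while a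
decomposition `∑ aᵢ ⊗ bᵢ ⊗ cᵢ` contracts to `∑ (μ ⬝ᵥ aᵢ) bᵢ cᵢᵀ`. The contraction with a nonzero
`μ` with `μ 0 = 0` never vanishes, which forces two of the `aᵢ` with `(aᵢ ⨯₃ aⱼ) 0 ≠ 0`.
Contracting with `μ = aᵢ ⨯₃ aⱼ` kills those two terms, so an invertible `3 × 3` matrix is a sum
of `r - 2` rank-one matrices: `r ≥ 5`.
-/

open Matrix

theorem Matrix.rank_sum_vecMulVec_le {ι m n R : Type*} [Fintype n] [CommRing R]
    [StrongRankCondition R] (s : Finset ι) (b : ι → m → R) (c : ι → n → R) :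
    (∑ i ∈ s, vecMulVec (b i) (c i)).rank ≤ s.card := by
  have hfactor : ∑ i ∈ s, vecMulVec (b i) (c i) =
      (of fun p (i : s) => b i p) * (of fun (i : s) q => c i q) := by
    ext p q
    simp [mul_apply, vecMulVec_apply, Matrix.sum_apply, ← Finset.sum_coe_sort s]
  rw [hfactor]
  exact (rank_mul_le_left _ _).trans ((rank_le_card_width _).trans_eq (Fintype.card_coe s))

def contractFirst {n : ℕ} (T : (Fin 3 → Fin n) → ℝ) (μ : Fin n → ℝ) :
    Matrix (Fin n) (Fin n) ℝ :=
  of fun p q => ∑ t, μ t * T ![t, p, q]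

section contractFirst

variable {n : ℕ} {ι : Type*}

theorem contractFirst_tensProdC (v : Fin 3 → Fin n → ℝ) (μ : Fin n → ℝ) :
    contractFirst (tensProdC v) μ = vecMulVec ((μ ⬝ᵥ v 0) • v 1) (v 2) := by
  ext p q
  simp only [contractFirst, tensProdC, Fin.prod_univ_three, of_apply, vecMulVec_apply,
    Pi.smul_apply, smul_eq_mul, dotProduct, Finset.sum_mul]
  refine Finset.sum_congr rfl fun t _ => ?_
  simp only [cons_val_zero, cons_val_one, cons_val_two, head_cons, tail_cons]
  ring

theorem contractFirst_sum (s : Finset ι) (T : ι → (Fin 3 → Fin n) → ℝ) (μ : Fin n → ℝ) :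
    contractFirst (∑ i ∈ s, T i) μ = ∑ i ∈ s, contractFirst (T i) μ := by
  ext p q
  simp only [contractFirst, of_apply, Finset.sum_apply, Matrix.sum_apply, Finset.mul_sum]
  exact Finset.sum_comm

theorem rank_contractFirst_le [Fintype ι] {v : ι → Fin 3 → Fin n → ℝ} {μ : Fin n → ℝ}
    (s : Finset ι) (hs : ∀ i ∉ s, μ ⬝ᵥ v i 0 = 0) :
    (contractFirst (∑ i, tensProdC (v i)) μ).rank ≤ s.card := by
  simp only [contractFirst_sum, contractFirst_tensProdC]
  rw [← Finset.sum_subset (Finset.subset_univ s) fun i _ hi => by simp [hs i hi]]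
  exact rank_sum_vecMulVec_le s _ _

theorem exists_dotProduct_ne_zero_of_contractFirst_ne_zero [Fintype ι]
    {v : ι → Fin 3 → Fin n → ℝ} {μ : Fin n → ℝ} (h : contractFirst (∑ i, tensProdC (v i)) μ ≠ 0) :
    ∃ i, μ ⬝ᵥ v i 0 ≠ 0 := by
  by_contra! h0
  exact h (by simp [contractFirst_sum, contractFirst_tensProdC, h0])

end contractFirst

theorem exists_cross_apply_zero_ne_zero {ι K : Type*} [CommRing K] [Nontrivial K]
    {a : ι → Fin 3 → K} (h : ∀ μ : Fin 3 → K, μ 0 = 0 → μ ≠ 0 → ∃ i, μ ⬝ᵥ a i ≠ 0) :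
    ∃ i j, (a i ⨯₃ a j) 0 ≠ 0 := by
  obtain ⟨i, hi⟩ := h (Pi.single 1 1) (by simp) (by simp [Pi.single_eq_zero_iff])
  rw [single_one_dotProduct] at hi
  obtain ⟨j, hj⟩ := h (Pi.single 0 1 ⨯₃ a i) (by simp [cross_apply])
    fun h0 => hi (by simpa [cross_apply] using congrFun h0 2)
  refine ⟨i, j, ?_⟩
  rwa [dotProduct_comm, triple_product_permutation, single_one_dotProduct] at hj

def fiveTermTensor : (Fin 3 → Fin 3) → ℝ :=
  tensProdC ![e 0, e 0, e 0] + tensProdC ![e 0, e 1, e 1] + tensProdC ![e 0, e 2, e 2]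
    + tensProdC ![e 1, e 0, e 1] + tensProdC ![e 2, e 0, e 2]
where
  e (a : Fin 3) : Fin 3 → ℝ := Pi.single a 1

open fiveTermTensor in
theorem rankLE_fiveTermTensor : rankLE fiveTermTensor 5 :=
  ⟨![![e 0, e 0, e 0], ![e 0, e 1, e 1], ![e 0, e 2, e 2], ![e 1, e 0, e 1], ![e 2, e 0, e 2]],
    by rw [Fin.sum_univ_five]; rfl⟩

theorem contractFirst_fiveTermTensor (μ : Fin 3 → ℝ) :
    contractFirst fiveTermTensor μ = !![μ 0, μ 1, μ 2; 0, μ 0, 0; 0, 0, μ 0] := by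
  ext p q
  fin_cases p <;> fin_cases q <;>
    simp [contractFirst, fiveTermTensor, fiveTermTensor.e, tensProdC, Fin.sum_univ_three,
      Fin.prod_univ_three, Pi.single_apply]

theorem not_rankLE_fiveTermTensor {r : ℕ} (hr : r < 5) : ¬ rankLE fiveTermTensor r := by
  rintro ⟨v, hv⟩
  have hconcise : ∀ μ : Fin 3 → ℝ, μ 0 = 0 → μ ≠ 0 → ∃ i, μ ⬝ᵥ v i 0 ≠ 0 := by
    intro μ hμ0 hμ
    refine exists_dotProduct_ne_zero_of_contractFirst_ne_zero ?_
    rw [← hv, contractFirst_fiveTermTensor]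
    intro h
    have h1 : μ 1 = 0 := by simpa using congrFun₂ h 0 1
    have h2 : μ 2 = 0 := by simpa using congrFun₂ h 0 2
    exact hμ (funext fun k => by fin_cases k <;> simp [hμ0, h1, h2])
  obtain ⟨i, j, hij⟩ := exists_cross_apply_zero_ne_zero hconcise
  have hne : i ≠ j := by rintro rfl; simp [cross_self] at hij
  have hle : (contractFirst fiveTermTensor (v i 0 ⨯₃ v j 0)).rank ≤ r - 2 := by
    rw [hv]
    refine (rank_contractFirst_le {i, j}ᶜ fun k hk => ?_).trans_eq ?_
    · rw [Finset.mem_compl, not_not, Finset.mem_insert, Finset.mem_singleton] at hk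
      rw [dotProduct_comm]
      rcases hk with rfl | rfl
      · exact dot_self_cross _ _
      · exact dot_cross_self _ _
    · rw [Finset.card_compl, Finset.card_pair hne, Fintype.card_fin]
  have hfull : (contractFirst fiveTermTensor (v i 0 ⨯₃ v j 0)).rank = 3 := by
    rw [rank_of_isUnit _ ((isUnit_iff_isUnit_det _).mpr ?_), Fintype.card_fin]
    rw [contractFirst_fiveTermTensor, det_fin_three]
    simpa using pow_ne_zero 3 hij
  omega

/-- The tensor `T = e₁⊗e₁⊗e₁ + e₁⊗e₂⊗e₂ + e₁⊗e₃⊗e₃ + e₂⊗e₁⊗e₂ + e₃⊗e₁⊗e₃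
∈ (ℝ³)^{⊗3}` has rank exactly 5. -/
theorem stmt10 (e : Fin 3 → Fin 3 → ℝ) (he : ∀ a, e a = Pi.single a 1)
    (T : (Fin 3 → Fin 3) → ℝ)
    (hT : T = tensProdC ![e 0, e 0, e 0] + tensProdC ![e 0, e 1, e 1]
        + tensProdC ![e 0, e 2, e 2] + tensProdC ![e 1, e 0, e 1]
        + tensProdC ![e 2, e 0, e 2]) :
    rankLE T 5 ∧ ¬ rankLE T 4 := by
  obtain rfl : e = fiveTermTensor.e := funext he
  subst hT
  exact ⟨rankLE_fiveTermTensor, not_rankLE_fiveTermTensor (by norm_num)⟩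
end

section
/- Let e_1, e_2, e_3, e_4 be the standard basis of ℝ⁴ and let T = e_1 ⊗ e_1 ⊗ e_1 + e_1 ⊗ e_2 ⊗ e_2 + e_1 ⊗ e_3 ⊗ e_3 + e_1 ⊗ e_4 ⊗ e_4 + e_2 ⊗ e_1 ⊗ e_2 + e_3 ⊗ e_1 ⊗ e_3 + e_4 ⊗ e_1 ⊗ e_4 ∈ ℝ⁴ ⊗ ℝ⁴ ⊗ ℝ⁴. Then T has rank exactly 7: T is a sum of 7 rank-one tensors and is not a sum of 6 rank-one tensors. -/
/-!
The lower bound is the substitution method: if `T` has rank `≤ r + 1` and its `c`-th slice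
in mode `m` is nonzero, then some rank-one summand has a nonzero `c`-th coordinate in mode
`m`, and adding suitable multiples of the `c`-th slice to the other slices and then deleting
it kills that summand, leaving a tensor of rank `≤ r`. Six such steps, on the slices
`2, 3, 4` of the first and then of the second mode, would leave the zero tensor, but its
`(1, 1, 1)` entry is still `1`: the first three steps only add the slices `e₁ ⊗ e_a` to the
first slice, the last three only add rows `b ≠ 1` of it to its first row, and all of these
vanish at `(1, 1)`.
-/

open Function

section SliceElimination

variable {d n : ℕ}

def elimVec (c : Fin n) (lam : Fin n → ℝ) (x : Fin n → ℝ) : Fin n → ℝ :=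
  fun a => if a = c then 0 else x a + lam a * x c

/-- `elimVec c lam` applied in mode `m`. -/
def sliceElim (m : Fin d) (c : Fin n) (lam : Fin n → ℝ) (T : (Fin d → Fin n) → ℝ) :
    (Fin d → Fin n) → ℝ :=
  fun i => if i m = c then 0 else T i + lam (i m) * T (update i m c)

theorem sliceElim_sum {ι : Type*} (s : Finset ι) (m : Fin d) (c : Fin n) (lam : Fin n → ℝ)
    (T : ι → (Fin d → Fin n) → ℝ) :
    sliceElim m c lam (∑ t ∈ s, T t) = ∑ t ∈ s, sliceElim m c lam (T t) := by
  funext i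
  simp only [sliceElim, Finset.sum_apply]
  split_ifs
  · simp
  · rw [Finset.mul_sum, Finset.sum_add_distrib]

theorem sliceElim_tensProdC (m : Fin d) (c : Fin n) (lam : Fin n → ℝ)
    (v : Fin d → Fin n → ℝ) :
    sliceElim m c lam (tensProdC v) = tensProdC (update v m (elimVec c lam (v m))) := by
  funext i
  cases d with
  | zero => exact m.elim0
  | succ d =>
    simp only [sliceElim, tensProdC, Fin.prod_univ_succAbove _ m, update_self, elimVec,
      update_of_ne (Fin.succAbove_ne m _)]
    split_ifs <;> ring

theorem tensProdC_eq_zero {v : Fin d → Fin n → ℝ} {k : Fin d} (hk : v k = 0) :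
    tensProdC v = 0 := by
  funext i
  exact Finset.prod_eq_zero (Finset.mem_univ k) (by simp [hk])

theorem rankLE_zero_iff {T : (Fin d → Fin n) → ℝ} : rankLE T 0 ↔ T = 0 := by
  simp [rankLE]

theorem rankLE.exists_sliceElim {r : ℕ} {T : (Fin d → Fin n) → ℝ} (h : rankLE T (r + 1))
    (m : Fin d) {i : Fin d → Fin n} (hi : T i ≠ 0) :
    ∃ lam, rankLE (sliceElim m (i m) lam T) r := by
  obtain ⟨v, rfl⟩ := h
  obtain ⟨t₀, ht₀⟩ : ∃ t₀, v t₀ m (i m) ≠ 0 := by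
    by_contra! hv
    rw [Finset.sum_apply] at hi
    exact hi (Finset.sum_eq_zero fun t _ => Finset.prod_eq_zero (Finset.mem_univ m) (hv t))
  set lam : Fin n → ℝ := fun a => -v t₀ m a / v t₀ m (i m)
  have hkill : elimVec (i m) lam (v t₀ m) = 0 := by
    funext a
    simp only [elimVec, lam, Pi.zero_apply]
    split_ifs
    · rfl
    · field_simp
      ring
  refine ⟨lam, fun s => update (v (t₀.succAbove s)) m
    (elimVec (i m) lam (v (t₀.succAbove s) m)), ?_⟩
  rw [sliceElim_sum, Fin.sum_univ_succAbove _ t₀, sliceElim_tensProdC,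
    tensProdC_eq_zero (k := m) (by rw [update_self, hkill]), zero_add]
  simp only [sliceElim_tensProdC]

end SliceElimination

theorem not_rankLE_six {T : (Fin 3 → Fin 4) → ℝ}
    (hT : ∀ i, T i = if i 0 = 0 then (if i 1 = i 2 then 1 else 0)
      else if i 1 = 0 ∧ i 2 = i 0 then 1 else 0) :
    ¬ rankLE T 6 := by
  intro h₆
  obtain ⟨l₁, h₅⟩ := h₆.exists_sliceElim 0 (i := ![3, 0, 3]) (by simp [hT])
  obtain ⟨l₂, h₄⟩ := h₅.exists_sliceElim 0 (i := ![2, 0, 2]) (by simp [sliceElim, hT])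
  obtain ⟨l₃, h₃⟩ := h₄.exists_sliceElim 0 (i := ![1, 0, 1]) (by simp [sliceElim, hT])
  obtain ⟨l₄, h₂⟩ := h₃.exists_sliceElim 1 (i := ![0, 3, 3]) (by simp [sliceElim, hT])
  obtain ⟨l₅, h₁⟩ := h₂.exists_sliceElim 1 (i := ![0, 2, 2]) (by simp [sliceElim, hT])
  obtain ⟨l₆, h₀⟩ := h₁.exists_sliceElim 1 (i := ![0, 1, 1]) (by simp [sliceElim, hT])
  have h₀₀₀ := congrFun (rankLE_zero_iff.mp h₀) ![0, 0, 0]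
  simp [sliceElim, hT] at h₀₀₀

/-- The tensor `T = e₁⊗e₁⊗e₁ + e₁⊗e₂⊗e₂ + e₁⊗e₃⊗e₃ + e₁⊗e₄⊗e₄ + e₂⊗e₁⊗e₂
+ e₃⊗e₁⊗e₃ + e₄⊗e₁⊗e₄ ∈ ℝ⁴ ⊗ ℝ⁴ ⊗ ℝ⁴` has rank exactly 7. -/
theorem stmt11 (e : Fin 4 → Fin 4 → ℝ) (he : ∀ a, e a = Pi.single a 1)
    (T : (Fin 3 → Fin 4) → ℝ)
    (hT : T = tensProdC ![e 0, e 0, e 0] + tensProdC ![e 0, e 1, e 1]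
        + tensProdC ![e 0, e 2, e 2] + tensProdC ![e 0, e 3, e 3]
        + tensProdC ![e 1, e 0, e 1] + tensProdC ![e 2, e 0, e 2]
        + tensProdC ![e 3, e 0, e 3]) :
    rankLE T 7 ∧ ¬ rankLE T 6 := by
  refine ⟨⟨![![e 0, e 0, e 0], ![e 0, e 1, e 1], ![e 0, e 2, e 2], ![e 0, e 3, e 3],
    ![e 1, e 0, e 1], ![e 2, e 0, e 2], ![e 3, e 0, e 3]], ?_⟩, not_rankLE_six fun i => ?_⟩
  · rw [hT, Fin.sum_univ_seven]
    rfl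
  · simp only [hT, he, Pi.add_apply, tensProdC, Fin.prod_univ_three, Matrix.cons_val_zero,
      Matrix.cons_val_one, Matrix.cons_val_two, Matrix.head_cons, Matrix.tail_cons]
    generalize i 0 = a, i 1 = b, i 2 = c
    fin_cases a <;> fin_cases b <;> fin_cases c <;> simp
end

section
/- Let n ≥ 2 and d ≥ 3, and define L : (ℤ/nℤ)^{d−1} → ℤ/nℤ by L(i_1,…,i_{d−1}) = i_{d−1} + Σ_{k=1}^{d−2} (−1)^{k+1} i_k. Let I = { (i_1,…,i_{d−1}, L(i_1,…,i_{d−1})) : i_k ∈ ℤ/nℤ } ⊆ (ℤ/nℤ)^d. Then there exists a subset J ⊆ I with |J| = n − 1 such that any two distinct elements of J have Hamming distance at least 3. -/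
/-!
Take points of `(ℤ/nℤ)^d` that vanish except in the coordinates `1`, `d - 1` and `d` (`0`, `d - 2`
and `d - 1` in Lean's indexing), where they are `a`, `b`, `a + b`. The alternating sum in `L` only
runs over the coordinates `1, …, d - 2`, so it sees just `a`, and these points lie on the graph of
`L`. Two of them differ in all three coordinates as soon as `a`, `b` and `a + b` all change, so it
suffices to find `n - 1` pairs `(a, b)` with pairwise distinct first coordinates, second
coordinates and sums. Take `a = b = p` for `p = 0, …, n - 2`, except that for even `n` the upper
half is shifted to `b = p + 1`: the sums `2p` then run through the even residues and the sums
`2p + 1 - n` through the odd ones.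
-/

open Function Finset

lemma Nat.eq_or_eq_add_of_mod_eq_of_lt_two_mul {n a b : ℕ} (ha : a < 2 * n) (hb : b < 2 * n)
    (h : a % n = b % n) : a = b ∨ a = b + n ∨ b = a + n := by
  have reduce : ∀ m < 2 * n, m % n = m ∨ m % n + n = m := by
    intro m hm
    rcases lt_or_ge m n with hmn | hmn
    · exact .inl (Nat.mod_eq_of_lt hmn)
    · right
      rw [Nat.mod_eq_sub_mod hmn, Nat.mod_eq_of_lt (by omega)]
      omega
  rcases reduce a ha with h₁ | h₁ <;> rcases reduce b hb with h₂ | h₂ <;> omega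

lemma ZMod.injective_natCast_comp {ι : Type*} {n : ℕ} {f : ι → ℕ} (hf : Injective f)
    (hlt : ∀ i, f i < 2 * n) (hne : ∀ i j, f i ≠ f j + n) : Injective fun i => (f i : ZMod n) := by
  intro i j h
  rcases Nat.eq_or_eq_add_of_mod_eq_of_lt_two_mul (hlt i) (hlt j)
    ((ZMod.natCast_eq_natCast_iff' _ _ n).mp h) with h | h | h
  · exact hf h
  · exact absurd h (hne i j)
  · exact absurd h (hne j i)

/-- The second coordinate `b` of the `p`-th pair of the construction. -/
def shiftedIndex (n p : ℕ) : ℕ := p + if n % 2 = 0 ∧ n ≤ 2 * p then 1 else 0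

lemma strictMono_shiftedIndex (n : ℕ) : StrictMono (shiftedIndex n) := by
  intro p q h
  unfold shiftedIndex
  split_ifs <;> omega

lemma shiftedIndex_lt {n p : ℕ} (hp : p + 1 < n) : shiftedIndex n p < n := by
  unfold shiftedIndex
  split_ifs <;> omega

lemma add_shiftedIndex_ne_add_shiftedIndex_add {n p q : ℕ} (hp : p + 1 < n) :
    p + shiftedIndex n p ≠ q + shiftedIndex n q + n := by
  unfold shiftedIndex
  split_ifs <;> omega

theorem ZMod.exists_injective_injective_add (n : ℕ) :
    ∃ a b : Fin (n - 1) → ZMod n, Injective a ∧ Injective b ∧ Injective (a + b) := by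
  have hp (p : Fin (n - 1)) : (p : ℕ) + 1 < n := by omega
  have hb (p : Fin (n - 1)) : shiftedIndex n p < n := shiftedIndex_lt (hp p)
  refine ⟨fun p => ((p : ℕ) : ZMod n), fun p => (shiftedIndex n p : ZMod n), ?_, ?_, ?_⟩
  · exact ZMod.injective_natCast_comp Fin.val_injective (fun p => by grind) (fun p q => by grind)
  · exact ZMod.injective_natCast_comp ((strictMono_shiftedIndex n).injective.comp Fin.val_injective)
      (fun p => by grind) (fun p q => by grind)
  · simp only [Pi.add_def, ← Nat.cast_add]
    exact ZMod.injective_natCast_comp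
      ((strictMono_id.add (strictMono_shiftedIndex n)).injective.comp Fin.val_injective)
      (fun p => by grind) (fun p q => add_shiftedIndex_ne_add_shiftedIndex_add (hp p))

lemma three_le_hammingDist {ι : Type*} [Fintype ι] {β : ι → Type*} [∀ i, DecidableEq (β i)]
    {u v : ∀ i, β i} {i j k : ι} (hij : i ≠ j) (hik : i ≠ k) (hjk : j ≠ k)
    (hi : u i ≠ v i) (hj : u j ≠ v j) (hk : u k ≠ v k) : 3 ≤ hammingDist u v := by
  classical
  calc 3 = #{i, j, k} := (card_eq_three.mpr ⟨i, j, k, hij, hik, hjk, rfl⟩).symm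
    _ ≤ #{l | u l ≠ v l} := card_le_card (by simp [insert_subset_iff, hi, hj, hk])
    _ = hammingDist u v := rfl

section GraphPoint

variable {R : Type*} [Ring R] {d : ℕ} (hd : 2 < d)

def graphPoint (a b : R) : Fin d → R :=
  Pi.single ⟨0, by omega⟩ a + Pi.single ⟨d - 2, by omega⟩ b + Pi.single ⟨d - 1, by omega⟩ (a + b)

lemma graphPoint_apply_zero (a b : R) : graphPoint hd a b ⟨0, by omega⟩ = a := by
  have h₁ : 0 ≠ d - 2 := by omega
  have h₂ : 0 ≠ d - 1 := by omega
  simp [graphPoint, Fin.ext_iff, h₁, h₂]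

lemma graphPoint_apply_sub_two (a b : R) : graphPoint hd a b ⟨d - 2, by omega⟩ = b := by
  have h₁ : d - 2 ≠ 0 := by omega
  have h₂ : d - 2 ≠ d - 1 := by omega
  simp [graphPoint, Fin.ext_iff, h₁, h₂]

lemma graphPoint_apply_sub_one (a b : R) : graphPoint hd a b ⟨d - 1, by omega⟩ = a + b := by
  have h₁ : d - 1 ≠ 0 := by omega
  have h₂ : d - 1 ≠ d - 2 := by omega
  simp [graphPoint, Fin.ext_iff, h₁, h₂]

lemma graphPoint_apply_castLE {k : Fin (d - 2)} (hk : (k : ℕ) ≠ 0) (a b : R) :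
    graphPoint hd a b (Fin.castLE (Nat.sub_le d 2) k) = 0 := by
  have h₁ : (k : ℕ) ≠ d - 2 := by omega
  have h₂ : (k : ℕ) ≠ d - 1 := by omega
  simp [graphPoint, Fin.ext_iff, hk, h₁, h₂]

lemma graphPoint_alternating_sum (a b : R) :
    ∑ k : Fin (d - 2), (-1 : R) ^ (k : ℕ) * graphPoint hd a b (Fin.castLE (Nat.sub_le d 2) k)
      = a := by
  rw [sum_eq_single ⟨0, by omega⟩ (fun k _ hk => by
    rw [graphPoint_apply_castLE hd (Fin.val_ne_iff.mpr hk), mul_zero]) (by simp)]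
  simpa using graphPoint_apply_zero hd a b

lemma graphPoint_apply_sub_one_eq_add_sum (a b : R) :
    graphPoint hd a b ⟨d - 1, by omega⟩ =
      graphPoint hd a b ⟨d - 2, by omega⟩ +
        ∑ k : Fin (d - 2),
          (-1 : R) ^ (k : ℕ) * graphPoint hd a b (Fin.castLE (Nat.sub_le d 2) k) := by
  rw [graphPoint_alternating_sum, graphPoint_apply_sub_one, graphPoint_apply_sub_two, add_comm]

lemma three_le_hammingDist_graphPoint [DecidableEq R] {a b a' b' : R} (ha : a ≠ a') (hb : b ≠ b')
    (hab : a + b ≠ a' + b') : 3 ≤ hammingDist (graphPoint hd a b) (graphPoint hd a' b') := by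
  refine three_le_hammingDist (i := ⟨0, by omega⟩) (j := ⟨d - 2, by omega⟩) (k := ⟨d - 1, by omega⟩)
    (by simp [Fin.ext_iff]; omega) (by simp [Fin.ext_iff]; omega) (by simp [Fin.ext_iff]; omega)
    ?_ ?_ ?_
  · rwa [graphPoint_apply_zero, graphPoint_apply_zero]
  · rwa [graphPoint_apply_sub_two, graphPoint_apply_sub_two]
  · rwa [graphPoint_apply_sub_one, graphPoint_apply_sub_one]

end GraphPoint

/-- For `n ≥ 2`, `d ≥ 3`, and the Latin hypercube
`L(i₁,…,i_{d−1}) = i_{d−1} + Σ_{k=1}^{d−2} (−1)^{k+1} i_k` on `(ℤ/nℤ)^{d−1}`,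
its graph `I = {(i, L(i))} ⊆ (ℤ/nℤ)^d` contains a subset `J` of size `n − 1`
whose elements have pairwise Hamming distance at least 3. -/
theorem stmt12 (n d : ℕ) (hd : 3 ≤ d) :
    ∃ J : Finset (Fin d → ZMod n),
      (∀ j ∈ J, j ⟨d - 1, by omega⟩ =
        j ⟨d - 2, by omega⟩ +
          ∑ k : Fin (d - 2), (-1 : ZMod n) ^ (k : ℕ) * j (Fin.castLE (by omega) k)) ∧
      J.card = n - 1 ∧
      (∀ a ∈ J, ∀ b ∈ J, a ≠ b → 3 ≤ hammingDist a b) := by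
  obtain ⟨a, b, ha, hb, hab⟩ := ZMod.exists_injective_injective_add n
  have hinj : Injective fun p => graphPoint hd (a p) (b p) := fun p q h => ha <| by
    simpa only [graphPoint_apply_zero] using congrFun h ⟨0, by omega⟩
  refine ⟨univ.map ⟨_, hinj⟩, ?_, by simp, ?_⟩
  · simpa using fun p => graphPoint_apply_sub_one_eq_add_sum hd (a p) (b p)
  · simp only [forall_mem_map, mem_univ, forall_const, Embedding.coeFn_mk, hinj.ne_iff]
    exact fun p q hpq => three_le_hammingDist_graphPoint hd (ha.ne hpq) (hb.ne hpq) (hab.ne hpq)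
end

section
/- Let n ≥ 2 and d ≥ 2, and let I = { (i_1,…,i_d) ∈ (ℤ/nℤ)^d : i_1 + ⋯ + i_d = 0 }. Then |I| = n^{d−1}, any two distinct elements of I have Hamming distance at least 2, and consequently for any scalars λ : I → ℝ∖{0}, the expression Σ_{i∈I} λ_i e_{i_1} ⊗ ⋯ ⊗ e_{i_d} (with e indexed by ℤ/nℤ the standard orthonormal basis of ℝ^n) is a two-orthogonal decomposition of length n^{d−1} in (ℝ^n)^{⊗d}. -/
/-- The rank-one tensor `v₁ ⊗ ⋯ ⊗ v_d` in `(ℝ^n)^{⊗d}` (with the coordinates of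
`ℝ^n` indexed by `ℤ/nℤ`), as an array. -/
def tensProdZ {d n : ℕ} [NeZero n] (v : Fin d → ZMod n → ℝ) :
    (Fin d → ZMod n) → ℝ :=
  fun i => ∏ k, v k (i k)

/-
A zero-sum tuple in `(ℤ/nℤ)^d` is determined by any `d - 1` of its coordinates, which gives both the
count `n^{d-1}` and the Hamming bound: two zero-sum tuples differing in exactly one coordinate `k`
would have sums differing by `i k - j k ≠ 0`. Two coordinates where `i` and `j` differ are two
factors in which the basis vectors `e_{i_k}` and `e_{j_k}` are orthogonal.
-/

open Finset

section ZeroSum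

variable {G : Type*} [AddCommGroup G]

theorem card_filter_sum_eq_zero_fin_succ [Fintype G] [DecidableEq G] (m : ℕ) :
    #{x : Fin (m + 1) → G | ∑ k, x k = 0} = Fintype.card G ^ m := by
  rw [show Fintype.card G ^ m = #(univ : Finset (Fin m → G)) by simp]
  refine card_nbij' Fin.tail (fun v => Fin.cons (-∑ k, v k) v) (by simp) ?_ ?_
    fun v _ => Fin.tail_cons _ _
  · intro v _
    simp [Fin.sum_univ_succ]
  · intro x hx
    have hx0 : x 0 + ∑ k, Fin.tail x k = 0 := by
      simpa [Fin.sum_univ_succ, Fin.tail] using hx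
    simp only [← eq_neg_of_add_eq_zero_left hx0, Fin.cons_self_tail]

theorem card_filter_sum_eq_zero [Fintype G] [DecidableEq G] (d : ℕ) :
    #{x : Fin d → G | ∑ k, x k = 0} = Fintype.card G ^ (d - 1) := by
  cases d with
  | zero => simp
  | succ m => exact card_filter_sum_eq_zero_fin_succ m

theorem two_le_hammingDist_of_sum_eq {ι : Type*} [Fintype ι] [DecidableEq G] {x y : ι → G}
    (hsum : ∑ k, x k = ∑ k, y k) (hne : x ≠ y) : 2 ≤ hammingDist x y := by
  by_contra! hlt
  have hone : hammingDist x y = 1 := by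
    have := hammingDist_pos.mpr hne
    omega
  obtain ⟨k, hk⟩ := card_eq_one.mp hone
  have hxk : x k ≠ y k := by
    simpa using (Finset.ext_iff.mp hk k).mpr (mem_singleton_self k)
  have hdiff : ∑ i, (x i - y i) = x k - y k := by
    rw [← sum_filter_of_ne fun i _ h => sub_ne_zero.mp h, hk, sum_singleton]
  exact hxk (sub_eq_zero.mp (by rw [← hdiff, sum_sub_distrib, hsum, sub_self]))

end ZeroSum

theorem exists_ne_of_two_le_hammingDist {ι : Type*} [Fintype ι] {β : ι → Type*}
    [∀ i, DecidableEq (β i)] {x y : ∀ i, β i} (h : 2 ≤ hammingDist x y) :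
    ∃ k₁ k₂, k₁ ≠ k₂ ∧ x k₁ ≠ y k₁ ∧ x k₂ ≠ y k₂ := by
  obtain ⟨k₁, hk₁, k₂, hk₂, hne⟩ := one_lt_card.mp h
  exact ⟨k₁, k₂, hne, (mem_filter.mp hk₁).2, (mem_filter.mp hk₂).2⟩

theorem fdot_single_single_of_ne {ι : Type*} [Fintype ι] [DecidableEq ι] {a b : ι}
    (hab : a ≠ b) : fdot (Pi.single a (1 : ℝ)) (Pi.single b (1 : ℝ)) = 0 := by
  refine sum_eq_zero fun x _ => ?_
  by_cases hxa : x = a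
  · simp [hxa, hab]
  · simp [hxa]

theorem tensProdZ_single_apply_self {d n : ℕ} [NeZero n] (i : Fin d → ZMod n) :
    tensProdZ (fun k => Pi.single (i k) (1 : ℝ)) i = 1 := by
  simp [tensProdZ]

theorem smul_tensProdZ_single_ne_zero {d n : ℕ} [NeZero n] (i : Fin d → ZMod n) {c : ℝ}
    (hc : c ≠ 0) : c • tensProdZ (fun k => Pi.single (i k) (1 : ℝ)) ≠ 0 := by
  intro h
  simpa [tensProdZ_single_apply_self, hc] using congrFun h i

theorem stmt13_general (n d : ℕ) [NeZero n]
    (I : Finset (Fin d → ZMod n))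
    (hI : I = Finset.univ.filter (fun i : Fin d → ZMod n => ∑ k, i k = 0)) :
    I.card = n ^ (d - 1) ∧
    (∀ i ∈ I, ∀ j ∈ I, i ≠ j → 2 ≤ hammingDist i j) ∧
    (∀ lam : (Fin d → ZMod n) → ℝ, (∀ i ∈ I, lam i ≠ 0) →
      (∀ i ∈ I, lam i • tensProdZ (fun k => Pi.single (i k) (1 : ℝ)) ≠ 0) ∧
      (∀ i ∈ I, ∀ j ∈ I, i ≠ j → ∃ k₁ k₂ : Fin d, k₁ ≠ k₂ ∧
        fdot (Pi.single (i k₁) (1 : ℝ)) (Pi.single (j k₁) (1 : ℝ)) = 0 ∧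
        fdot (Pi.single (i k₂) (1 : ℝ)) (Pi.single (j k₂) (1 : ℝ)) = 0)) := by
  have hsum : ∀ i ∈ I, ∑ k, i k = 0 := fun i hi => by simpa [hI] using hi
  have hdist : ∀ i ∈ I, ∀ j ∈ I, i ≠ j → 2 ≤ hammingDist i j := fun i hi j hj =>
    two_le_hammingDist_of_sum_eq ((hsum i hi).trans (hsum j hj).symm)
  refine ⟨by rw [hI, card_filter_sum_eq_zero, ZMod.card], hdist, fun lam hlam => ⟨?_, ?_⟩⟩
  · exact fun i hi => smul_tensProdZ_single_ne_zero i (hlam i hi)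
  · intro i hi j hj hij
    obtain ⟨k₁, k₂, hk, h₁, h₂⟩ := exists_ne_of_two_le_hammingDist (hdist i hi j hj hij)
    exact ⟨k₁, k₂, hk, fdot_single_single_of_ne h₁, fdot_single_single_of_ne h₂⟩

/-- For `I = {i ∈ (ℤ/nℤ)^d : i₁ + ⋯ + i_d = 0}` one has `|I| = n^{d−1}`, distinct
elements of `I` have Hamming distance at least 2, and for any nonzero scalars `λ`,
the expression `Σ_{i∈I} λᵢ e_{i₁} ⊗ ⋯ ⊗ e_{i_d}` is a two-orthogonal decomposition
of length `n^{d−1}`: its summands are nonzero and any two distinct summands are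
orthogonal in at least two factors. -/
theorem stmt13 (n d : ℕ) [NeZero n] (hn : 2 ≤ n) (hd : 2 ≤ d)
    (I : Finset (Fin d → ZMod n))
    (hI : I = Finset.univ.filter (fun i : Fin d → ZMod n => ∑ k, i k = 0)) :
    I.card = n ^ (d - 1) ∧
    (∀ i ∈ I, ∀ j ∈ I, i ≠ j → 2 ≤ hammingDist i j) ∧
    (∀ lam : (Fin d → ZMod n) → ℝ, (∀ i ∈ I, lam i ≠ 0) →
      (∀ i ∈ I, lam i • tensProdZ (fun k => Pi.single (i k) (1 : ℝ)) ≠ 0) ∧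
      (∀ i ∈ I, ∀ j ∈ I, i ≠ j → ∃ k₁ k₂ : Fin d, k₁ ≠ k₂ ∧
        fdot (Pi.single (i k₁) (1 : ℝ)) (Pi.single (j k₁) (1 : ℝ)) = 0 ∧
        fdot (Pi.single (i k₂) (1 : ℝ)) (Pi.single (j k₂) (1 : ℝ)) = 0)) :=
  stmt13_general n d I hI
end

section
/- Consider partially symmetric two-orthogonal decompositions in V = (ℝ^{m_1})^{⊗d_1} ⊗ ⋯ ⊗ (ℝ^{m_p})^{⊗d_p} ⊗ ℝ^{n_1} ⊗ ⋯ ⊗ ℝ^{n_q}, where p ≥ 1, q ≥ 1, each d_k ≥ 2, each m_k ≥ 2, and n_1 ≤ n_2 ≤ ⋯ ≤ n_q with each n_l ≥ 2. Then: (a) every such decomposition T = Σ_{i=1}^r ℓ_{1,i}^{⊗d_1} ⊗ ⋯ ⊗ ℓ_{p,i}^{⊗d_p} ⊗ u_{1,i} ⊗ ⋯ ⊗ u_{q,i} with nonzero summands, in which for all i ≠ j the total multiplicity of orthogonal factors Σ_{k : ⟨ℓ_{k,i}, ℓ_{k,j}⟩ = 0} d_k + |{ l : ⟨u_{l,i},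 u_{l,j}⟩ = 0 }| is at least 2, has r ≤ m_1 ⋯ m_p · n_1 ⋯ n_{q−1}; and (b) there exists such a decomposition with exactly m_1 ⋯ m_p · n_1 ⋯ n_{q−1} nonzero summands. -/
/-- The partially symmetric rank-one tensor
`x₁^{⊗d₁} ⊗ ⋯ ⊗ x_p^{⊗d_p} ⊗ u₁ ⊗ ⋯ ⊗ u_q` in
`(ℝ^{m₁})^{⊗d₁} ⊗ ⋯ ⊗ (ℝ^{m_p})^{⊗d_p} ⊗ ℝ^{n₁} ⊗ ⋯ ⊗ ℝ^{n_q}`, as an array. -/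
def psProd {p q : ℕ} (d' : Fin p → ℕ) {m : Fin p → ℕ} {n : Fin q → ℕ}
    (x : (k : Fin p) → Fin (m k) → ℝ) (u : (l : Fin q) → Fin (n l) → ℝ) :
    (((k : Fin p) → Fin (d' k) → Fin (m k)) × ((l : Fin q) → Fin (n l))) → ℝ :=
  fun a => (∏ k, ∏ s, x k (a.1 k s)) * ∏ l, u l (a.2 l)

open scoped Classical in
/-- The total multiplicity of orthogonal factors between two partially symmetric
rank-one tensors: `Σ_{k : ⟨x_k, x'_k⟩ = 0} d_k + #{ l : ⟨u_l, u'_l⟩ = 0 }`. -/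
noncomputable def orthMult {p q : ℕ} (d' : Fin p → ℕ) {m : Fin p → ℕ} {n : Fin q → ℕ}
    (x x' : (k : Fin p) → Fin (m k) → ℝ) (u u' : (l : Fin q) → Fin (n l) → ℝ) : ℕ :=
  (∑ k ∈ Finset.univ.filter (fun k => fdot (x k) (x' k) = 0), d' k) +
    (Finset.univ.filter (fun l => fdot (u l) (u' l) = 0)).card

/-!
Keeping one copy of each symmetric factor and dropping the last vector factor sends every
summand to a nonzero rank-one tensor in a space of dimension `N`. These images are pairwise
orthogonal: either some `ℓ`-factors are orthogonal, and one copy of them survives, or at least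
two `u`-factors are, and at most one of them is dropped. Hence `r ≤ N`.

Conversely, index standard basis vectors by pairs of words `a ∈ ∏ [m_k]`, `c ∈ ∏_{l < q} [n_l]`,
and use in the last slot the basis vector of index `∑ c_l mod n_q`. Distinct `a`'s are orthogonal
in `d_k ≥ 2` slots. Equal `a`'s with `c`'s differing in one place only differ in the last slot
too, because `n_l ≤ n_q`.
-/

open Finset

section fdot

variable {ι : Type*} [Fintype ι]

lemma fdot_self_pos {v : ι → ℝ} (hv : v ≠ 0) : 0 < fdot v v := by
  obtain ⟨t, ht⟩ := Function.ne_iff.mp hv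
  exact sum_pos' (fun a _ => mul_self_nonneg (v a)) ⟨t, mem_univ t, mul_self_pos.mpr ht⟩

lemma fdot_single_eq_zero_iff [DecidableEq ι] {i j : ι} :
    fdot (Pi.single i (1 : ℝ)) (Pi.single j 1) = 0 ↔ i ≠ j := by
  simp [fdot, Pi.single_apply, eq_comm]

lemma fdot_pi_prod [DecidableEq ι] {κ : ι → Type*} [∀ i, Fintype (κ i)] (v w : ∀ i, κ i → ℝ) :
    fdot (fun a : ∀ i, κ i => ∏ i, v i (a i)) (fun a => ∏ i, w i (a i)) =
      ∏ i, fdot (v i) (w i) := by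
  simp only [fdot, Fintype.prod_sum, prod_mul_distrib]

lemma fdot_prod_mul {α β : Type*} [Fintype α] [Fintype β] (f f' : α → ℝ) (g g' : β → ℝ) :
    fdot (fun a : α × β => f a.1 * g a.2) (fun a => f' a.1 * g' a.2) = fdot f f' * fdot g g' := by
  simp only [fdot, Fintype.sum_prod_type, sum_mul_sum]
  exact sum_congr rfl fun a _ => sum_congr rfl fun b _ => by ring

lemma card_le_of_pairwise_fdot_eq_zero {σ : Type*} [Fintype σ] {v : σ → ι → ℝ}
    (hv : ∀ s, v s ≠ 0) (horth : Pairwise fun s t => fdot (v s) (v t) = 0) :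
    Fintype.card σ ≤ Fintype.card ι := by
  let w : σ → EuclideanSpace ℝ ι := fun s => WithLp.toLp 2 (v s)
  have hinner : ∀ s t, inner ℝ (w s) (w t) = fdot (v s) (v t) := fun s t => by
    simp [w, PiLp.inner_apply, fdot, mul_comm]
  have hw : LinearIndependent ℝ w :=
    linearIndependent_of_ne_zero_of_inner_eq_zero
      (fun s h => hv s (by simpa [w] using congrArg WithLp.ofLp h))
      (fun s t hst => (hinner s t).trans (horth hst))
  simpa using hw.fintype_card_le_finrank

end fdot

section reduced

variable {p q : ℕ} {d' m : Fin p → ℕ} {n : Fin q → ℕ}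

lemma psProd_eq_zero_of_left {x : ∀ k, Fin (m k) → ℝ} (u : ∀ l, Fin (n l) → ℝ) {k : Fin p}
    (hk : d' k ≠ 0) (hx : x k = 0) : psProd d' x u = 0 := by
  funext a
  rw [psProd, prod_eq_zero (mem_univ k) (prod_eq_zero (mem_univ ⟨0, Nat.pos_of_ne_zero hk⟩)
    (by rw [hx, Pi.zero_apply])), zero_mul, Pi.zero_apply]

lemma psProd_eq_zero_of_right (x : ∀ k, Fin (m k) → ℝ) {u : ∀ l, Fin (n l) → ℝ} {l : Fin q}
    (hu : u l = 0) : psProd d' x u = 0 := by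
  funext a
  rw [psProd, prod_eq_zero (mem_univ l) (by rw [hu, Pi.zero_apply]), mul_zero, Pi.zero_apply]

def reducedProd (l₀ : Fin q) (x : ∀ k, Fin (m k) → ℝ) (u : ∀ l, Fin (n l) → ℝ) :
    ((∀ k, Fin (m k)) × (∀ l : {l // l ≠ l₀}, Fin (n l))) → ℝ :=
  fun a => (∏ k, x k (a.1 k)) * ∏ l : {l // l ≠ l₀}, u l (a.2 l)

lemma card_reducedIndex (l₀ : Fin q) :
    Fintype.card ((∀ k, Fin (m k)) × (∀ l : {l // l ≠ l₀}, Fin (n l))) =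
      (∏ k, m k) * ∏ l ∈ univ.erase l₀, n l := by
  simp only [Fintype.card_prod, Fintype.card_pi, Fintype.card_fin]
  rw [prod_subtype (p := (· ≠ l₀)) (univ.erase l₀) (fun l => by simp) n]

lemma fdot_reducedProd (l₀ : Fin q) (x x' : ∀ k, Fin (m k) → ℝ) (u u' : ∀ l, Fin (n l) → ℝ) :
    fdot (reducedProd l₀ x u) (reducedProd l₀ x' u') =
      (∏ k, fdot (x k) (x' k)) * ∏ l : {l // l ≠ l₀}, fdot (u l) (u' l) := by
  rw [← fdot_pi_prod x x', ← fdot_pi_prod (fun l : {l // l ≠ l₀} => u l) (fun l => u' l)]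
  exact fdot_prod_mul (fun a : ∀ k, Fin (m k) => ∏ k, x k (a k)) (fun a => ∏ k, x' k (a k))
    (fun b : ∀ l : {l // l ≠ l₀}, Fin (n l) => ∏ l : {l // l ≠ l₀}, u l (b l))
    (fun b => ∏ l : {l // l ≠ l₀}, u' l (b l))

lemma reducedProd_ne_zero (hd : ∀ k, d' k ≠ 0) (l₀ : Fin q) {x : ∀ k, Fin (m k) → ℝ}
    {u : ∀ l, Fin (n l) → ℝ} (h : psProd d' x u ≠ 0) : reducedProd l₀ x u ≠ 0 := by
  have hx : ∀ k, x k ≠ 0 := fun k hx => h (psProd_eq_zero_of_left u (hd k) hx)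
  have hu : ∀ l, u l ≠ 0 := fun l hu => h (psProd_eq_zero_of_right x hu)
  have hpos : 0 < fdot (reducedProd l₀ x u) (reducedProd l₀ x u) := by
    rw [fdot_reducedProd]
    exact mul_pos (prod_pos fun k _ => fdot_self_pos (hx k))
      (prod_pos fun l _ => fdot_self_pos (hu l))
  intro h0
  simp [h0, fdot] at hpos

lemma fdot_reducedProd_eq_zero {l₀ : Fin q} {x x' : ∀ k, Fin (m k) → ℝ}
    {u u' : ∀ l, Fin (n l) → ℝ} (h : 2 ≤ orthMult d' x x' u u') :
    fdot (reducedProd l₀ x u) (reducedProd l₀ x' u') = 0 := by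
  rw [fdot_reducedProd]
  by_cases hk : ∃ k, fdot (x k) (x' k) = 0
  · obtain ⟨k, hk⟩ := hk
    rw [prod_eq_zero (mem_univ k) hk, zero_mul]
  · have hempty : univ.filter (fun k => fdot (x k) (x' k) = 0) = ∅ :=
      filter_eq_empty_iff.mpr fun k _ => not_exists.mp hk k
    rw [orthMult, hempty, sum_empty, zero_add] at h
    obtain ⟨l, hl, hl₀⟩ := exists_mem_ne h l₀
    rw [prod_eq_zero (mem_univ (⟨l, hl₀⟩ : {l // l ≠ l₀})) (mem_filter.mp hl).2, mul_zero]

theorem card_le_of_two_le_orthMult (hd : ∀ k, d' k ≠ 0) (l₀ : Fin q) {r : ℕ}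
    (x : Fin r → ∀ k, Fin (m k) → ℝ) (u : Fin r → ∀ l, Fin (n l) → ℝ)
    (hnz : ∀ i, psProd d' (x i) (u i) ≠ 0)
    (horth : ∀ i j : Fin r, i ≠ j → 2 ≤ orthMult d' (x i) (x j) (u i) (u j)) :
    r ≤ (∏ k, m k) * ∏ l ∈ univ.erase l₀, n l := by
  have := card_le_of_pairwise_fdot_eq_zero (fun i => reducedProd_ne_zero hd l₀ (hnz i))
    (fun i j hij => fdot_reducedProd_eq_zero (horth i j hij))
  rwa [Fintype.card_fin, card_reducedIndex] at this

end reduced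

section parityCheck

variable {ι : Type*} [Fintype ι] [DecidableEq ι]

lemma hammingDist_eq_add_hammingDist_subtype_ne {β : ι → Type*} [∀ i, DecidableEq (β i)]
    (x y : ∀ i, β i) (i₀ : ι) :
    hammingDist x y = (if x i₀ ≠ y i₀ then 1 else 0) +
      hammingDist (fun i : {i // i ≠ i₀} => x i) (fun i => y i) := by
  simp only [hammingDist, card_filter]
  exact Fintype.sum_eq_add_sum_subtype_ne _ i₀

variable {n : ι → ℕ}

lemma sum_mod_ne_of_hammingDist_eq_one {M : ℕ} (hle : ∀ i, n i ≤ M) {c c' : ∀ i, Fin (n i)}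
    (h : hammingDist c c' = 1) : (∑ i, (c i : ℕ)) % M ≠ (∑ i, (c' i : ℕ)) % M := by
  obtain ⟨i₁, hi₁⟩ := card_eq_one.mp h
  have hmem : i₁ ∈ univ.filter (fun i => c i ≠ c' i) := hi₁ ▸ mem_singleton_self i₁
  have hne := (mem_filter.mp hmem).2
  have heq : ∀ i ∈ univ.erase i₁, (c i : ℕ) = c' i := fun i hi => by
    by_contra hci
    have : i ∈ univ.filter (fun i => c i ≠ c' i) :=
      mem_filter.mpr ⟨mem_univ i, fun h => hci (congrArg _ h)⟩
    rw [hi₁] at this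
    exact ne_of_mem_erase hi (mem_singleton.mp this)
  intro hmod
  rw [← add_sum_erase _ _ (mem_univ i₁), ← add_sum_erase _ _ (mem_univ i₁),
    sum_congr rfl heq] at hmod
  exact hne (Fin.ext (Nat.ModEq.eq_of_lt_of_lt (Nat.ModEq.add_right_cancel' _ hmod)
    ((c i₁).isLt.trans_le (hle i₁)) ((c' i₁).isLt.trans_le (hle i₁))))

variable {i₀ : ι}

def parityExtend (hn : 0 < n i₀) (c : ∀ i : {i // i ≠ i₀}, Fin (n i)) : ∀ i, Fin (n i) :=
  fun i =>
    if h : i = i₀ then Fin.cast (congrArg n h.symm) ⟨(∑ j, (c j : ℕ)) % n i₀, Nat.mod_lt _ hn⟩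
    else c ⟨i, h⟩

lemma two_le_hammingDist_parityExtend (hn : 0 < n i₀) (hle : ∀ i, n i ≤ n i₀)
    {c c' : ∀ i : {i // i ≠ i₀}, Fin (n i)} (h : c ≠ c') :
    2 ≤ hammingDist (parityExtend hn c) (parityExtend hn c') := by
  have hrestrict : ∀ c, (fun i : {i // i ≠ i₀} => parityExtend hn c i) = c :=
    fun c => funext fun i => dif_neg i.2
  have hlast : ∀ c, (parityExtend hn c i₀ : ℕ) = (∑ j, (c j : ℕ)) % n i₀ := fun c => by
    simp [parityExtend]
  rw [hammingDist_eq_add_hammingDist_subtype_ne _ _ i₀, hrestrict, hrestrict]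
  by_cases h1 : hammingDist c c' = 1
  · have hne :=
      sum_mod_ne_of_hammingDist_eq_one (n := fun i : {i // i ≠ i₀} => n i) (fun i => hle i) h1
    rw [if_pos fun h => hne (by rw [← hlast, ← hlast, h]), h1]
  · have := hammingDist_pos.mpr h
    omega

end parityCheck

section standardBasis

variable {p q : ℕ} {d' m : Fin p → ℕ} {n : Fin q → ℕ}

lemma psProd_single_ne_zero (a : ∀ k, Fin (m k)) (b : ∀ l, Fin (n l)) :
    psProd d' (fun k => Pi.single (a k) 1) (fun l => Pi.single (b l) 1) ≠ 0 := fun h => by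
  simpa [psProd] using congrFun h (fun k _ => a k, b)

lemma orthMult_single (a a' : ∀ k, Fin (m k)) (b b' : ∀ l, Fin (n l)) :
    orthMult d' (fun k => Pi.single (a k) 1) (fun k => Pi.single (a' k) 1)
      (fun l => Pi.single (b l) 1) (fun l => Pi.single (b' l) 1) =
      (∑ k ∈ univ.filter (fun k => a k ≠ a' k), d' k) + hammingDist b b' := by
  simp only [orthMult, fdot_single_eq_zero_iff, hammingDist]

lemma two_le_orthMult_single (hd : ∀ k, 2 ≤ d' k) {a a' : ∀ k, Fin (m k)}
    {b b' : ∀ l, Fin (n l)} (h : a ≠ a' ∨ 2 ≤ hammingDist b b') :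
    2 ≤ orthMult d' (fun k => Pi.single (a k) 1) (fun k => Pi.single (a' k) 1)
      (fun l => Pi.single (b l) 1) (fun l => Pi.single (b' l) 1) := by
  rw [orthMult_single]
  rcases h with ha | hb
  · obtain ⟨k, hk⟩ := Function.ne_iff.mp ha
    exact (hd k).trans ((single_le_sum (fun _ _ => Nat.zero_le _)
      (mem_filter.mpr ⟨mem_univ k, hk⟩)).trans (Nat.le_add_right _ _))
  · omega

end standardBasis

/-- In `(ℝ^{m₁})^{⊗d₁} ⊗ ⋯ ⊗ (ℝ^{m_p})^{⊗d_p} ⊗ ℝ^{n₁} ⊗ ⋯ ⊗ ℝ^{n_q}` with all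
`d_k ≥ 2` and `n₁ ≤ ⋯ ≤ n_q`, the maximal length of a partially symmetric
two-orthogonal decomposition is `N = m₁ ⋯ m_p · n₁ ⋯ n_{q−1}`:
(a) every such decomposition has at most `N` summands, and
(b) there exists one with exactly `N` nonzero summands. -/
theorem stmt14 (p q : ℕ) (hq : 1 ≤ q)
    (d' m : Fin p → ℕ) (hd : ∀ k, 2 ≤ d' k)
    (n : Fin q → ℕ) (hn : ∀ l, 2 ≤ n l) (hmono : Monotone n)
    (N : ℕ)
    (hN : N = (∏ k, m k) * ∏ l ∈ Finset.univ.erase (⟨q - 1, by omega⟩ : Fin q), n l) :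
    (∀ (r : ℕ) (x : Fin r → (k : Fin p) → Fin (m k) → ℝ)
        (u : Fin r → (l : Fin q) → Fin (n l) → ℝ),
      (∀ i, psProd d' (x i) (u i) ≠ 0) →
      (∀ i j : Fin r, i ≠ j → 2 ≤ orthMult d' (x i) (x j) (u i) (u j)) →
      r ≤ N)
    ∧
    (∃ (x : Fin N → (k : Fin p) → Fin (m k) → ℝ)
        (u : Fin N → (l : Fin q) → Fin (n l) → ℝ),
      (∀ i, psProd d' (x i) (u i) ≠ 0) ∧
      (∀ i j : Fin N, i ≠ j → 2 ≤ orthMult d' (x i) (x j) (u i) (u j))) := by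
  set lq : Fin q := ⟨q - 1, by omega⟩
  refine ⟨fun r x u hnz horth =>
    hN ▸ card_le_of_two_le_orthMult (fun k => (two_pos.trans_le (hd k)).ne') lq x u hnz horth, ?_⟩
  have hlq : 0 < n lq := two_pos.trans_le (hn lq)
  have hle : ∀ l, n l ≤ n lq := fun l => hmono (Fin.le_def.mpr (by simp [lq]; omega))
  let e : Fin N ≃ (∀ k, Fin (m k)) × (∀ l : {l // l ≠ lq}, Fin (n l)) :=
    (Fintype.equivFinOfCardEq (by rw [card_reducedIndex, hN])).symm
  refine ⟨fun i k => Pi.single ((e i).1 k) 1, fun i l => Pi.single (parityExtend hlq (e i).2 l) 1,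
    fun i => psProd_single_ne_zero _ _, fun i j hij => two_le_orthMult_single hd ?_⟩
  by_cases ha : (e i).1 = (e j).1
  · exact Or.inr <|
      two_le_hammingDist_parityExtend hlq hle fun hc => hij (e.injective (Prod.ext ha hc))
  · exact Or.inl ha
end

section
/- Let p ≥ 1, d_1,…,d_p ≥ 2, and let ℓ_k, y_k ∈ ℝ^{m_k} be nonzero vectors for k = 1,…,p. For each k and each ℓ ∈ ℝ^{m_k}, let τ_{k,ℓ} = Σ_{m=1}^{d_k} ℓ_1^{⊗d_1} ⊗ ⋯ ⊗ (ℓ_k^{⊗(m−1)} ⊗ ℓ ⊗ ℓ_k^{⊗(d_k−m)}) ⊗ ⋯ ⊗ ℓ_p^{⊗d_p} be the corresponding tangent vector to the Segre–Veronese cone at x = ℓ_1^{⊗d_1} ⊗ ⋯ ⊗ ℓ_p^{⊗d_p}. Then the rank-one tensor y = y_1^{⊗d_1} ⊗ ⋯ ⊗ y_p^{⊗d_p} satisfies ⟨y, τ_{k,ℓ}⟩ = 0 for all k ∈ {1,…,p} and all ℓ ∈ ℝ^{m_k} if and only if there exists k with ⟨ℓ_k, y_k⟩ = 0. -/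
/-- The rank-one tensor `ℓ₁^{⊗d₁} ⊗ ⋯ ⊗ ℓ_p^{⊗d_p}` in
`(ℝ^{m₁})^{⊗d₁} ⊗ ⋯ ⊗ (ℝ^{m_p})^{⊗d_p}`, as an array. -/
def svProd {p : ℕ} (d' : Fin p → ℕ) {m : Fin p → ℕ}
    (x : (k : Fin p) → Fin (m k) → ℝ) :
    ((k : Fin p) → Fin (d' k) → Fin (m k)) → ℝ :=
  fun a => ∏ k, ∏ s, x k (a k s)

/-- The tangent vector `τ_{k,v} = Σ_{m=1}^{d_k} ℓ₁^{⊗d₁} ⊗ ⋯ ⊗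
(ℓ_k^{⊗(m−1)} ⊗ v ⊗ ℓ_k^{⊗(d_k−m)}) ⊗ ⋯ ⊗ ℓ_p^{⊗d_p}` to the Segre–Veronese
cone at `ℓ₁^{⊗d₁} ⊗ ⋯ ⊗ ℓ_p^{⊗d_p}`, as an array. -/
def svTangent {p : ℕ} (d' : Fin p → ℕ) {m : Fin p → ℕ}
    (x : (k : Fin p) → Fin (m k) → ℝ) (k : Fin p) (v : Fin (m k) → ℝ) :
    ((k : Fin p) → Fin (d' k) → Fin (m k)) → ℝ :=
  fun a => (∑ s : Fin (d' k), v (a k s) * ∏ s' ∈ Finset.univ.erase s, x k (a k s'))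
      * ∏ k' ∈ Finset.univ.erase k, ∏ s, x k' (a k' s)

open Finset

lemma fdot_comm {ι : Type*} [Fintype ι] (u v : ι → ℝ) : fdot u v = fdot v u :=
  dotProduct_comm u v

lemma fdot_sum {ι σ : Type*} [Fintype ι] (u : ι → ℝ) (t : Finset σ) (w : σ → ι → ℝ) :
    fdot u (fun a => ∑ s ∈ t, w s a) = ∑ s ∈ t, fdot u (w s) := by
  simp only [fdot, mul_sum]
  exact sum_comm

section RankOne

variable {ι : Type*} [Fintype ι] [DecidableEq ι] {δ : ι → Type*} [∀ i, Fintype (δ i)]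

lemma fdot_prod_prod (u v : ∀ i, δ i → ℝ) :
    fdot (fun a : ∀ i, δ i => ∏ i, u i (a i)) (fun a => ∏ i, v i (a i))
      = ∏ i, fdot (u i) (v i) := by
  simp only [fdot, ← prod_mul_distrib]
  exact (Fintype.prod_sum fun i b => u i b * v i b).symm

lemma fdot_prod_mul_prod_erase (u g : ∀ i, δ i → ℝ) (i₀ : ι) (f : δ i₀ → ℝ) :
    fdot (fun a : ∀ i, δ i => ∏ i, u i (a i))
        (fun a => f (a i₀) * ∏ i ∈ univ.erase i₀, g i (a i))
      = fdot (u i₀) f * ∏ i ∈ univ.erase i₀, fdot (u i) (g i) := by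
  have prod_update : ∀ G : ∀ i, (δ i → ℝ) → ℝ,
      ∏ i, G i (Function.update g i₀ f i) = G i₀ f * ∏ i ∈ univ.erase i₀, G i (g i) := by
    intro G
    rw [← mul_prod_erase _ _ (mem_univ i₀), Function.update_self]
    congr 1
    exact prod_congr rfl fun i hi => by rw [Function.update_of_ne (ne_of_mem_erase hi)]
  rw [← prod_update fun i w => fdot (u i) w, ← fdot_prod_prod]
  congr
  funext a
  exact (prod_update fun i w => w (a i)).symm

end RankOne

section Veronese

variable {κ : Type*} [Fintype κ] {n : ℕ}

lemma fdot_prod_prod_const (x z : κ → ℝ) :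
    fdot (fun b : Fin n → κ => ∏ s, x (b s)) (fun b => ∏ s, z (b s)) = fdot x z ^ n := by
  rw [fdot_prod_prod (fun _ => x) (fun _ => z), prod_const, card_univ, Fintype.card_fin]

lemma fdot_prod_mul_prod_erase_const (x z f : κ → ℝ) (s₀ : Fin n) :
    fdot (fun b : Fin n → κ => ∏ s, x (b s)) (fun b => f (b s₀) * ∏ s ∈ univ.erase s₀, z (b s))
      = fdot x f * fdot x z ^ (n - 1) := by
  rw [fdot_prod_mul_prod_erase (fun _ => x) (fun _ => z), prod_const,
    card_erase_of_mem (mem_univ _), card_univ, Fintype.card_fin]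

end Veronese

lemma fdot_svProd_svTangent {p : ℕ} (d' : Fin p → ℕ) {m : Fin p → ℕ}
    (l y : (k : Fin p) → Fin (m k) → ℝ) (k : Fin p) (v : Fin (m k) → ℝ) :
    fdot (svProd d' y) (svTangent d' l k v)
      = d' k * fdot (y k) v * fdot (y k) (l k) ^ (d' k - 1)
          * ∏ k' ∈ univ.erase k, fdot (y k') (l k') ^ d' k' := by
  refine (fdot_prod_mul_prod_erase (fun k (b : Fin (d' k) → Fin (m k)) => ∏ s, y k (b s))
    (fun k b => ∏ s, l k (b s)) k
    (fun b => ∑ s, v (b s) * ∏ s' ∈ univ.erase s, l k (b s'))).trans ?_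
  simp only [fdot_sum, fdot_prod_mul_prod_erase_const, fdot_prod_prod_const, sum_const, card_univ,
    Fintype.card_fin, nsmul_eq_mul]
  ring

lemma fdot_svProd_svTangent_self {p : ℕ} (d' : Fin p → ℕ) {m : Fin p → ℕ}
    (l y : (k : Fin p) → Fin (m k) → ℝ) {k : Fin p} (hk : d' k ≠ 0) :
    fdot (svProd d' y) (svTangent d' l k (l k)) = d' k * ∏ k', fdot (y k') (l k') ^ d' k' := by
  rw [fdot_svProd_svTangent, ← mul_prod_erase univ _ (mem_univ k), mul_assoc _ (fdot _ _),
    ← pow_succ', Nat.sub_add_cancel (Nat.one_le_iff_ne_zero.mpr hk), mul_assoc]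

theorem stmt15_general (p : ℕ) (hp : 1 ≤ p) (d' m : Fin p → ℕ) (hd : ∀ k, 2 ≤ d' k)
    (l y : (k : Fin p) → Fin (m k) → ℝ) :
    (∀ (k : Fin p) (v : Fin (m k) → ℝ), fdot (svProd d' y) (svTangent d' l k v) = 0)
    ↔ (∃ k : Fin p, fdot (l k) (y k) = 0) := by
  constructor
  · intro H
    let k₀ : Fin p := ⟨0, hp⟩
    have hk₀ : d' k₀ ≠ 0 := by have := hd k₀; omega
    have h := H k₀ (l k₀)
    rw [fdot_svProd_svTangent_self d' l y hk₀, mul_eq_zero, prod_eq_zero_iff] at h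
    obtain ⟨k, -, hk⟩ := h.resolve_left (Nat.cast_ne_zero.mpr hk₀)
    exact ⟨k, fdot_comm (y k) (l k) ▸ eq_zero_of_pow_eq_zero hk⟩
  · rintro ⟨k₁, hk₁⟩ k v
    rw [fdot_comm] at hk₁
    rw [fdot_svProd_svTangent]
    rcases eq_or_ne k k₁ with rfl | hne
    · rw [hk₁, zero_pow (by have := hd k; omega), mul_zero, zero_mul]
    · rw [prod_eq_zero (mem_erase.mpr ⟨hne.symm, mem_univ k₁⟩)
        (by rw [hk₁, zero_pow (by have := hd k₁; omega)]), mul_zero]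

/-- For nonzero vectors `ℓ_k, y_k` and degrees `d_k ≥ 2`, the rank-one tensor
`y = y₁^{⊗d₁} ⊗ ⋯ ⊗ y_p^{⊗d_p}` is orthogonal to all tangent vectors `τ_{k,v}`
at `x = ℓ₁^{⊗d₁} ⊗ ⋯ ⊗ ℓ_p^{⊗d_p}` if and only if `⟨ℓ_k, y_k⟩ = 0` for some `k`. -/
theorem stmt15 (p : ℕ) (hp : 1 ≤ p) (d' m : Fin p → ℕ) (hd : ∀ k, 2 ≤ d' k)
    (l y : (k : Fin p) → Fin (m k) → ℝ)
    (hl : ∀ k, l k ≠ 0) (hy : ∀ k, y k ≠ 0) :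
    (∀ (k : Fin p) (v : Fin (m k) → ℝ), fdot (svProd d' y) (svTangent d' l k v) = 0)
    ↔ (∃ k : Fin p, fdot (l k) (y k) = 0) :=
  stmt15_general p hp d' m hd l y
end

section
/- Let d ≥ 2 and r ≥ 1. There exist bipartite simple graphs G_1,…,G_d on the vertex set {1,…,r} such that every pair of distinct vertices u ≠ v is adjacent in at least two of the graphs G_1,…,G_d, if and only if r ≤ 2^{d−1}. -/
/-!
Colouring each `G_j` by `s_j` turns a vertex `u` into the binary word `(s_j u)_j`, and the
covering condition says precisely that distinct vertices receive words at Hamming distance at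
least `2`; conversely, such a code yields the graphs `G_j` joining the vertices whose words differ
at position `j`. A code of length `d` and minimum distance `2` over an alphabet `β` has at most
`|β|^(d-1)` words (Singleton bound), and the parity-check code, i.e. the words of coordinate sum
zero, attains it.
-/

open Finset

section HammingCodes

variable {ι β : Type*} [Fintype ι] [DecidableEq β]

theorem two_le_hammingDist_iff {x y : ι → β} :
    2 ≤ hammingDist x y ↔ ∃ i j, i ≠ j ∧ x i ≠ y i ∧ x j ≠ y j := by
  rw [hammingDist, Nat.succ_le_iff, one_lt_card]
  simp only [mem_filter, mem_univ, true_and]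
  constructor
  · rintro ⟨i, hi, j, hj, hij⟩
    exact ⟨i, j, hij, hi, hj⟩
  · rintro ⟨i, j, hij, hi, hj⟩
    exact ⟨i, hi, j, hj, hij⟩

theorem two_le_hammingNorm_of_sum_eq_zero [AddCommGroup β] {z : ι → β}
    (hsum : ∑ i, z i = 0) (hz : z ≠ 0) : 2 ≤ hammingNorm z := by
  by_contra! hlt
  obtain ⟨i, hi⟩ := Function.ne_iff.mp hz
  have hsupp : ∀ j ≠ i, z j = 0 := by
    intro j hji
    by_contra hj
    exact hji (card_le_one.mp (Nat.lt_succ_iff.mp hlt) j (by simpa using hj) i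
      (by simpa using hi))
  rw [sum_eq_single i (fun j _ hji => hsupp j hji) (by simp)] at hsum
  exact hi hsum

theorem two_le_hammingDist_of_sum_eq_s16 [AddCommGroup β] {x y : ι → β}
    (hsum : ∑ i, x i = ∑ i, y i) (hxy : x ≠ y) : 2 ≤ hammingDist x y := by
  rw [hammingDist_eq_hammingNorm]
  refine two_le_hammingNorm_of_sum_eq_zero ?_ (neg_add_eq_zero.not.mpr hxy)
  simp [sum_add_distrib, hsum]

end HammingCodes

section SingletonBound

variable {V β : Type*} [Fintype V] [Fintype β] [DecidableEq β] {d : ℕ}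

-- Forgetting the last coordinate is injective on such a code.
theorem card_le_pow_of_two_le_hammingDist (f : V → Fin d → β)
    (hf : ∀ u v, u ≠ v → 2 ≤ hammingDist (f u) (f v)) :
    Fintype.card V ≤ Fintype.card β ^ (d - 1) := by
  cases d with
  | zero =>
    have : Subsingleton V := ⟨fun u v => by
      by_contra huv
      simpa using (hf u v huv).trans hammingDist_le_card_fintype⟩
    simpa using Fintype.card_le_one_iff_subsingleton.mpr this
  | succ m =>
    have hinit : Function.Injective fun u => Fin.init (f u) := by
      intro u v huv
      by_contra hne
      obtain ⟨i, j, hij, hi, hj⟩ := two_le_hammingDist_iff.mp (hf u v hne)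
      have hlast : ∀ k, f u k ≠ f v k → k = Fin.last m := by
        intro k hk
        by_contra hk'
        obtain ⟨k, rfl⟩ := Fin.exists_castSucc_eq.mpr hk'
        exact hk (congrFun huv k)
      exact hij ((hlast i hi).trans (hlast j hj).symm)
    simpa using Fintype.card_le_of_injective _ hinit

theorem exists_two_le_hammingDist_of_card_le [AddCommGroup β]
    (hV : Fintype.card V ≤ Fintype.card β ^ (d - 1)) :
    ∃ f : V → Fin d → β, ∀ u v, u ≠ v → 2 ≤ hammingDist (f u) (f v) := by
  cases d with
  | zero =>
    have : Subsingleton V := Fintype.card_le_one_iff_subsingleton.mp (by simpa using hV)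
    exact ⟨0, fun u v huv => absurd (Subsingleton.elim u v) huv⟩
  | succ m =>
    obtain ⟨c⟩ :=
      Function.Embedding.nonempty_of_card_le (α := V) (β := Fin m → β) (by simpa using hV)
    let extend : (Fin m → β) → Fin (m + 1) → β := fun x => Fin.snoc x (-∑ i, x i)
    have hsum : ∀ x, ∑ i, extend x i = 0 := by
      intro x
      simp [extend, Fin.sum_univ_castSucc]
    refine ⟨fun u => extend (c u), fun u v huv => two_le_hammingDist_of_sum_eq_s16 ?_ ?_⟩
    · rw [hsum, hsum]
    · intro h
      exact huv (c.injective (by simpa [extend] using congrArg Fin.init h))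

end SingletonBound

theorem stmt16_general (d r : ℕ) :
    (∃ G : Fin d → SimpleGraph (Fin r),
      (∀ j, ∃ s : Fin r → Bool, ∀ u v, (G j).Adj u v → s u ≠ s v) ∧
      (∀ u v : Fin r, u ≠ v →
        ∃ j₁ j₂ : Fin d, j₁ ≠ j₂ ∧ (G j₁).Adj u v ∧ (G j₂).Adj u v))
    ↔ r ≤ 2 ^ (d - 1) := by
  constructor
  · rintro ⟨G, hbip, hcover⟩
    choose s hs using hbip
    have := card_le_pow_of_two_le_hammingDist (fun u j => s j u) fun u v huv => by
      obtain ⟨i, j, hij, hi, hj⟩ := hcover u v huv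
      exact two_le_hammingDist_iff.mpr ⟨i, j, hij, hs i u v hi, hs j u v hj⟩
    simpa using this
  · intro hr
    obtain ⟨f, hf⟩ := exists_two_le_hammingDist_of_card_le (V := Fin r) (β := ZMod 2) (d := d)
      (by simpa using hr)
    let e : ZMod 2 ≃ Bool := Fintype.equivOfCardEq rfl
    refine ⟨fun j => (⊤ : SimpleGraph (ZMod 2)).comap (f · j),
      fun j => ⟨fun u => e (f u j), ?_⟩, ?_⟩
    · intro u v huv
      exact e.injective.ne ((SimpleGraph.top_adj _ _).mp huv)
    · intro u v huv
      obtain ⟨i, j, hij, hi, hj⟩ := two_le_hammingDist_iff.mp (hf u v huv)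
      exact ⟨i, j, hij, by simpa using hi, by simpa using hj⟩

/-- There exist bipartite simple graphs `G₁,…,G_d` on `r` vertices such that every
pair of distinct vertices is adjacent in at least two of them, if and only if
`r ≤ 2^{d−1}`. -/
theorem stmt16 (d r : ℕ) (hd : 2 ≤ d) (hr : 1 ≤ r) :
    (∃ G : Fin d → SimpleGraph (Fin r),
      (∀ j, ∃ s : Fin r → Bool, ∀ u v, (G j).Adj u v → s u ≠ s v) ∧
      (∀ u v : Fin r, u ≠ v →
        ∃ j₁ j₂ : Fin d, j₁ ≠ j₂ ∧ (G j₁).Adj u v ∧ (G j₂).Adj u v))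
    ↔ r ≤ 2 ^ (d - 1) :=
  stmt16_general d r
end

section
/- Let d ≥ 2 and r = 2^{d−1}. Let G_1,…,G_d be simple graphs on the vertex set {1,…,r}, each a disjoint union of complete bipartite graphs, such that every pair of distinct vertices is adjacent in at least two of the graphs G_1,…,G_d. Then each G_j is a connected complete bipartite graph K_{2^{d−2}, 2^{d−2}}: there is a function s_j : {1,…,r} → {0,1} taking each value on exactly 2^{d−2} vertices, with u adjacent to v in G_j if and only if s_j(u) ≠ s_j(v). -/
/-!
Give each vertex `v` its side vector `(s₁ v, …, s_d v) ∈ {0,1}^d`. Vertices adjacent in `G_i` lie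
on different sides of `G_i`, so distinct vertices have side vectors at Hamming distance at least
two: they form a code of `2^(d-1)` words and minimum distance two. Such a code is maximal, i.e.
deleting any one coordinate is a bijection onto `{0,1}^(d-1)`, and hence it is closed under
flipping any two coordinates. Flipping `j` and some `k ≠ j` swaps the two sides of `G_j`, so they
have equal size; and two words differing exactly in `j` and `k` are adjacent in `G_j` and `G_k`
only, so they lie in the same component of `G_j`. Such moves connect any two words, hence `G_j`
is a single complete bipartite graph.
-/

open Finset Function

namespace BoolCube

section Flip

variable {ι : Type*} [DecidableEq ι]

def flip (k : ι) (x : ι → Bool) : ι → Bool := update x k (!x k)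

@[simp] lemma flip_apply_self (k : ι) (x : ι → Bool) : flip k x k = !x k := update_self ..

@[simp] lemma flip_apply_of_ne {i k : ι} (h : i ≠ k) (x : ι → Bool) : flip k x i = x i :=
  update_of_ne h ..

@[simp] lemma flip_flip (k : ι) (x : ι → Bool) : flip k (flip k x) = x := by
  ext i; by_cases h : i = k <;> simp [h]

lemma flip_injective (k : ι) : Injective (flip k : (ι → Bool) → ι → Bool) :=
  LeftInverse.injective (flip_flip k)

end Flip

variable {ι V : Type*} [Fintype ι] {S : V → ι → Bool}

lemma eq_of_forall_ne_eq (hS : Pairwise fun u v => 2 ≤ hammingDist (S u) (S v)) {u v : V}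
    {k : ι} (h : ∀ i ≠ k, S u i = S v i) : u = v := by
  by_contra huv
  have : hammingDist (S u) (S v) ≤ 1 :=
    card_le_one.2 fun i hi i' hi' => by
      simp only [mem_filter, mem_univ, true_and] at hi hi'
      exact (not_imp_comm.1 (h i) hi).trans (not_imp_comm.1 (h i') hi').symm
  have := hS huv
  omega

lemma injective_of_two_le_hammingDist (hS : Pairwise fun u v => 2 ≤ hammingDist (S u) (S v)) :
    Injective S := by
  intro u v h
  by_contra huv
  have := hS huv
  simp [h] at this

variable [DecidableEq ι] [Fintype V]

lemma exists_forall_ne_eq (hS : Pairwise fun u v => 2 ≤ hammingDist (S u) (S v))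
    (hcard : Fintype.card V = 2 ^ (Fintype.card ι - 1)) (k : ι) (x : ι → Bool) :
    ∃ v, ∀ i ≠ k, S v i = x i := by
  let puncture : V → {i // i ≠ k} → Bool := fun v i => S v i
  have hinj : Injective puncture := fun u v h =>
    eq_of_forall_ne_eq hS fun i hi => congrFun h ⟨i, hi⟩
  have hbij : Bijective puncture :=
    (Fintype.bijective_iff_injective_and_card _).2 ⟨hinj, by simp [hcard]⟩
  obtain ⟨v, hv⟩ := hbij.2 fun i => x i
  exact ⟨v, fun i hi => congrFun hv ⟨i, hi⟩⟩

lemma exists_eq_flip_flip (hS : Pairwise fun u v => 2 ≤ hammingDist (S u) (S v))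
    (hcard : Fintype.card V = 2 ^ (Fintype.card ι - 1)) {k l : ι} (hkl : k ≠ l) (u : V) :
    ∃ w, S w = flip k (flip l (S u)) := by
  obtain ⟨w, hw⟩ := exists_forall_ne_eq hS hcard k (flip l (S u))
  refine ⟨w, funext fun i => ?_⟩
  by_cases hik : i = k
  · subst hik
    rw [flip_apply_self, flip_apply_of_ne hkl]
    refine Bool.eq_not.2 fun hwk => ?_
    -- otherwise `S w = flip l (S u)` would be at distance one from `S u`
    have hwu : w = u := eq_of_forall_ne_eq hS (k := l) fun j hj => by
      by_cases hjk : j = i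
      · rw [hjk, hwk]
      · rw [hw j hjk, flip_apply_of_ne hj]
    simpa [hwu] using hw l (Ne.symm hkl)
  · rw [hw i hik, flip_apply_of_ne hik]

lemma card_filter_apply_eq_le (hS : Pairwise fun u v => 2 ≤ hammingDist (S u) (S v))
    (hcard : Fintype.card V = 2 ^ (Fintype.card ι - 1)) {j k : ι} (hkj : k ≠ j) (b : Bool) :
    #{v | S v j = b} ≤ #{v | S v j = !b} := by
  choose φ hφ using exists_eq_flip_flip hS hcard (Ne.symm hkj)
  refine card_le_card_of_injOn φ (fun v hv => ?_) fun u _ v _ huv => ?_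
  · simp_all [flip_apply_of_ne hkj.symm]
  · apply injective_of_two_le_hammingDist hS
    simpa [hφ, (flip_injective _).eq_iff] using congrArg S huv

lemma card_filter_apply_eq (hS : Pairwise fun u v => 2 ≤ hammingDist (S u) (S v))
    (hcard : Fintype.card V = 2 ^ (Fintype.card ι - 1)) (hι : 2 ≤ Fintype.card ι) (j : ι)
    (b : Bool) : #{v | S v j = b} = 2 ^ (Fintype.card ι - 2) := by
  obtain ⟨k, hkj⟩ := Fintype.exists_ne_of_one_lt_card hι j
  have hle := card_filter_apply_eq_le hS hcard hkj
  have heq : #{v | S v j = b} = #{v | S v j = !b} :=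
    le_antisymm (hle b) (by simpa using hle (!b))
  have hsum : #{v | S v j = b} + #{v | S v j = !b} = 2 ^ (Fintype.card ι - 1) := by
    simpa [← Bool.eq_not, hcard] using card_filter_add_card_filter_not (s := univ) (S · j = b)
  have hpow : 2 ^ (Fintype.card ι - 1) = 2 * 2 ^ (Fintype.card ι - 2) := by
    rw [← pow_succ']; congr 1; omega
  omega

lemma apply_eq_of_flip_flip (hS : Pairwise fun u v => 2 ≤ hammingDist (S u) (S v))
    (hcard : Fintype.card V = 2 ^ (Fintype.card ι - 1)) {α : Type*} {f : V → α} {j : ι}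
    (hf : ∀ u w k, k ≠ j → S w = flip j (flip k (S u)) → f u = f w) (u v : V) : f u = f v := by
  suffices ∀ D : Finset ι, ∀ x y, (∀ i ≠ j, S x i ≠ S y i ↔ i ∈ D) → f x = f y from
    this {i | i ≠ j ∧ S u i ≠ S v i} u v fun i hi => by simp [hi]
  intro D
  induction D using Finset.induction_on with
  | empty =>
    intro x y hxy
    exact congrArg f <| eq_of_forall_ne_eq hS fun i hi => not_not.1 fun h => by
      simpa using (hxy i hi).1 h
  | insert k D hkD ih =>
    intro x y hxy
    by_cases hkj : k = j
    · exact ih x y fun i hi => by simpa [hkj, hi] using hxy i hi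
    obtain ⟨w, hw⟩ := exists_eq_flip_flip hS hcard (Ne.symm hkj) x
    refine (hf x w k hkj hw).trans (ih w y fun i hi => ?_)
    by_cases hik : i = k
    · subst hik
      simpa [hw, flip_apply_of_ne hkj, hkD] using (hxy i hkj).2 (mem_insert_self i D)
    · simpa [hw, flip_apply_of_ne hi, flip_apply_of_ne hik, hik] using hxy i hi

section Graphs

variable {ι V : Type*} {G : ι → SimpleGraph V} {S : V → ι → Bool}

lemma pairwise_two_le_hammingDist [Fintype ι] (hadj : ∀ i u v, (G i).Adj u v → S u i ≠ S v i)
    (h2 : ∀ u v, u ≠ v → ∃ j₁ j₂, j₁ ≠ j₂ ∧ (G j₁).Adj u v ∧ (G j₂).Adj u v) :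
    Pairwise fun u v => 2 ≤ hammingDist (S u) (S v) := by
  intro u v huv
  obtain ⟨j₁, j₂, hj, h₁, h₂⟩ := h2 u v huv
  exact one_lt_card.2 ⟨j₁, by simpa using hadj _ _ _ h₁, j₂, by simpa using hadj _ _ _ h₂, hj⟩

lemma adj_of_eq_flip_flip [DecidableEq ι] (hadj : ∀ i u v, (G i).Adj u v → S u i ≠ S v i)
    (h2 : ∀ u v, u ≠ v → ∃ j₁ j₂, j₁ ≠ j₂ ∧ (G j₁).Adj u v ∧ (G j₂).Adj u v)
    {u w : V} {j k : ι} (hkj : k ≠ j) (hw : S w = flip j (flip k (S u))) : (G j).Adj u w := by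
  have huw : u ≠ w := fun h => by simpa [h, flip_apply_of_ne hkj.symm] using congrFun hw j
  have hmem : ∀ i, (G i).Adj u w → i = j ∨ i = k := fun i hi => by
    by_contra! h
    exact hadj i u w hi (by simp [hw, flip_apply_of_ne h.1, flip_apply_of_ne h.2])
  obtain ⟨j₁, j₂, hj, h₁, h₂⟩ := h2 u w huw
  rcases hmem j₁ h₁ with rfl | rfl
  · exact h₁
  rcases hmem j₂ h₂ with rfl | rfl
  · exact h₂
  · exact absurd rfl hj

end Graphs

end BoolCube

/-- Let `r = 2^{d−1}` and let `G₁,…,G_d` be simple graphs on `r` vertices, each a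
disjoint union of complete bipartite graphs, such that every pair of distinct
vertices is adjacent in at least two of the graphs. Then each `G_j` is the
complete bipartite graph `K_{2^{d−2}, 2^{d−2}}`. -/
theorem stmt17 (d : ℕ) (hd : 2 ≤ d)
    (G : Fin d → SimpleGraph (Fin (2 ^ (d - 1))))
    (hbip : ∀ j, ∃ (C : Type) (c : Fin (2 ^ (d - 1)) → C)
        (s : Fin (2 ^ (d - 1)) → Bool),
      ∀ u v, (G j).Adj u v ↔ (c u = c v ∧ s u ≠ s v))
    (h2 : ∀ u v : Fin (2 ^ (d - 1)), u ≠ v →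
      ∃ j₁ j₂ : Fin d, j₁ ≠ j₂ ∧ (G j₁).Adj u v ∧ (G j₂).Adj u v) :
    ∀ j, ∃ s : Fin (2 ^ (d - 1)) → Bool,
      (Finset.univ.filter (fun v => s v = true)).card = 2 ^ (d - 2) ∧
      (Finset.univ.filter (fun v => s v = false)).card = 2 ^ (d - 2) ∧
      (∀ u v, (G j).Adj u v ↔ s u ≠ s v) := by
  choose C c s hcs using hbip
  let S : Fin (2 ^ (d - 1)) → Fin d → Bool := fun v i => s i v
  have hadj : ∀ i u v, (G i).Adj u v → S u i ≠ S v i := fun i u v h => ((hcs i u v).1 h).2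
  have hS := BoolCube.pairwise_two_le_hammingDist hadj h2
  have hcard : Fintype.card (Fin (2 ^ (d - 1))) = 2 ^ (Fintype.card (Fin d) - 1) := by simp
  have hι : 2 ≤ Fintype.card (Fin d) := by simpa using hd
  intro j
  have hc : ∀ u v, c j u = c j v := BoolCube.apply_eq_of_flip_flip hS hcard
    fun u w _ hkj hw => ((hcs j u w).1 (BoolCube.adj_of_eq_flip_flip hadj h2 hkj hw)).1
  refine ⟨s j, ?_, ?_, fun u v => by rw [hcs, and_iff_right (hc u v)]⟩
  · simpa using BoolCube.card_filter_apply_eq hS hcard hι j true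
  · simpa using BoolCube.card_filter_apply_eq hS hcard hι j false
end

section
/- Let d ≥ 2 and let G_1,…,G_d be simple graphs on the vertex set {1,…,r}, each a disjoint union of complete bipartite graphs, such that every pair of distinct vertices is adjacent in at least two of the graphs G_1,…,G_d. Let c_d be the number of connected components of G_d (isolated vertices count as components). Then c_d + r ≤ 2^{d−1} + 1, and moreover if c_d + r = 2^{d−1} + 1 then r = 2^{d−1}. -/
/-!
Label each vertex `u` by the vector of its sides `(s₁ u, …, s_{d-1} u) ∈ {0,1}^{d-1}` in the first
`d - 1` graphs. Adjacent vertices of `Gᵢ` lie on different sides of `Gᵢ`, and every pair of distinct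
vertices is adjacent in `G_d` or in two of the first `d - 1` graphs. So the labelling is injective,
and vertices whose labels are at Hamming distance one are adjacent in `G_d`: `c_d` is at most the
number of components of the subgraph of the hypercube `Q_{d-1}` spanned by the labels.

For a set `S` of vertices of `Q_n`, the number of components of `Q_n[S]` plus `|S|` is at most
`2^n + 1`, with equality only if `|S| = 2^n`. Split `Q_n` along the first coordinate into two copies
of `Q_{n-1}`: either the two halves of `S` project to disjoint sets, and then `|S| ≤ 2^{n-1}`, or
some edge of `Q_n[S]` crosses the split, and then `Q_n[S]` has fewer components than its two halves
together.
-/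

open Function Finset

theorem Nat.card_lt_of_surjective_of_not_injective {α β : Type*} [Finite α] {f : α → β}
    (hs : Surjective f) (hi : ¬ Injective f) : Nat.card β < Nat.card α := by
  have := Finite.of_surjective f hs
  have := Fintype.ofFinite α
  have := Fintype.ofFinite β
  simpa only [Nat.card_eq_fintype_card] using Fintype.card_lt_of_surjective_not_injective f hs hi

theorem Fin.eq_of_head_eq_of_tail_eq {n : ℕ} {α : Type*} {x y : Fin (n + 1) → α}
    (h₀ : x 0 = y 0) (h : Fin.tail x = Fin.tail y) : x = y :=
  funext (Fin.cases h₀ (congrFun h))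

theorem hammingDist_eq_hammingDist_tail_add {n : ℕ} {β : Type*} [DecidableEq β]
    (x y : Fin (n + 1) → β) :
    hammingDist x y = hammingDist (Fin.tail x) (Fin.tail y) + if x 0 = y 0 then 0 else 1 := by
  rw [hammingDist, hammingDist, card_filter, card_filter, Fin.sum_univ_succ, add_comm]
  congr 1
  exact ite_not _ _ _

theorem two_le_hammingDist {ι : Type*} [Fintype ι] {β : ι → Type*} [∀ i, DecidableEq (β i)]
    {x y : ∀ i, β i} {i j : ι} (hij : i ≠ j) (hi : x i ≠ y i) (hj : x j ≠ y j) :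
    2 ≤ hammingDist x y := by
  classical
  calc 2 = #{i, j} := (card_pair hij).symm
    _ ≤ hammingDist x y := card_le_card (by simp [insert_subset_iff, hi, hj])

namespace SimpleGraph

variable {V : Type*} (G : SimpleGraph V)

theorem card_connectedComponent_le [Finite V] : Nat.card G.ConnectedComponent ≤ Nat.card V :=
  Nat.card_le_card_of_surjective _ Quot.mk_surjective

theorem surjective_sumElim_map_induce_compl (s : Set V) :
    Surjective (Sum.elim (ConnectedComponent.map (Embedding.induce (G := G) s).toHom)
      (ConnectedComponent.map (Embedding.induce (G := G) sᶜ).toHom)) := by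
  refine ConnectedComponent.ind fun v => ?_
  by_cases hv : v ∈ s
  · exact ⟨.inl ((G.induce s).connectedComponentMk ⟨v, hv⟩), rfl⟩
  · exact ⟨.inr ((G.induce sᶜ).connectedComponentMk ⟨v, hv⟩), rfl⟩

theorem card_connectedComponent_add_one_le_of_adj [Finite V] {s : Set V} {u v : V}
    (huv : G.Adj u v) (hu : u ∈ s) (hv : v ∉ s) :
    Nat.card G.ConnectedComponent + 1 ≤
      Nat.card (G.induce s).ConnectedComponent + Nat.card (G.induce sᶜ).ConnectedComponent := by
  rw [← Nat.card_sum, Nat.add_one_le_iff]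
  refine Nat.card_lt_of_surjective_of_not_injective (G.surjective_sumElim_map_induce_compl s)
    fun hinj => ?_
  cases @hinj (.inl ((G.induce s).connectedComponentMk ⟨u, hu⟩))
    (.inr ((G.induce sᶜ).connectedComponentMk ⟨v, hv⟩)) (ConnectedComponent.sound huv.reachable)

def hypercube (n : ℕ) : SimpleGraph (Fin n → Bool) where
  Adj x y := hammingDist x y = 1
  symm := ⟨fun x y (h : hammingDist x y = 1) => (hammingDist_comm y x).trans h⟩
  loopless := ⟨fun x (h : hammingDist x x = 1) => by simp at h⟩

theorem hypercube_comap_eq_comap_tail {W : Type*} {n : ℕ} {g : W → Fin (n + 1) → Bool}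
    (hg : ∀ w w', g w 0 = g w' 0) :
    (hypercube (n + 1)).comap g = (hypercube n).comap (fun w => Fin.tail (g w)) := by
  ext w w'
  simp [hypercube, hammingDist_eq_hammingDist_tail_add (g w), hg w w']

theorem card_connectedComponent_comap_hypercube_add_card_le {V : Type*} [Finite V] {n : ℕ}
    {f : V → Fin n → Bool} (hf : Injective f) :
    Nat.card ((hypercube n).comap f).ConnectedComponent + Nat.card V ≤ 2 ^ n + 1 ∧
      (Nat.card ((hypercube n).comap f).ConnectedComponent + Nat.card V = 2 ^ n + 1 →
        Nat.card V = 2 ^ n) := by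
  induction n generalizing V with
  | zero =>
    have hV : Nat.card V ≤ 1 := by simpa using Nat.card_le_card_of_injective f hf
    have := card_connectedComponent_le ((hypercube 0).comap f)
    simp only [pow_zero]
    omega
  | succ n ih =>
    set H := (hypercube (n + 1)).comap f
    set s : Set V := {v | f v 0 = false}
    have hhalf : ∀ t : Set V, (∀ a b : t, f a 0 = f b 0) →
        Nat.card (H.induce t).ConnectedComponent + Nat.card t ≤ 2 ^ n + 1 ∧
          (Nat.card (H.induce t).ConnectedComponent + Nat.card t = 2 ^ n + 1 →
            Nat.card t = 2 ^ n) := by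
      intro t ht
      have := ih (f := fun a : t => Fin.tail (f a))
        fun a b h => Subtype.ext (hf (Fin.eq_of_head_eq_of_tail_eq (ht a b) h))
      rwa [← hypercube_comap_eq_comap_tail ht] at this
    obtain ⟨hs₁, hs₂⟩ := hhalf s fun a b => a.2.trans b.2.symm
    obtain ⟨hsc₁, hsc₂⟩ := hhalf sᶜ fun a b =>
      (Bool.eq_true_of_not_eq_false a.2).trans (Bool.eq_true_of_not_eq_false b.2).symm
    have hcard : Nat.card s + Nat.card (sᶜ : Set V) = Nat.card V := by
      rw [← Nat.card_sum]
      exact Nat.card_congr (Equiv.Set.sumCompl s)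
    rw [pow_succ]
    by_cases htail : Injective fun v => Fin.tail (f v)
    · have hV : Nat.card V ≤ 2 ^ n := by simpa using Nat.card_le_card_of_injective _ htail
      have := card_connectedComponent_le H
      have := Nat.one_le_two_pow (n := n)
      omega
    · obtain ⟨u, v, htuv, huv⟩ : ∃ u v, Fin.tail (f u) = Fin.tail (f v) ∧ u ≠ v := by
        simpa [Injective] using htail
      have h₀ : f u 0 ≠ f v 0 := fun h => huv (hf (Fin.eq_of_head_eq_of_tail_eq h htuv))
      have hadj : H.Adj u v := by
        simp [H, hypercube, hammingDist_eq_hammingDist_tail_add (f u), htuv, h₀]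
      have hsplit : Nat.card H.ConnectedComponent + 1 ≤
          Nat.card (H.induce s).ConnectedComponent + Nat.card (H.induce sᶜ).ConnectedComponent := by
        cases hu : f u 0
        · exact H.card_connectedComponent_add_one_le_of_adj hadj hu (by simpa [s, hu] using h₀.symm)
        · exact H.card_connectedComponent_add_one_le_of_adj hadj.symm
            (by simpa [s, hu] using h₀.symm) (by simp [s, hu])
      omega

theorem injective_of_adj_castSucc {V : Type*} {n : ℕ} {G : Fin (n + 1) → SimpleGraph V}
    {f : V → Fin n → Bool} (hdiff : ∀ i u v, (G i.castSucc).Adj u v → f u i ≠ f v i)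
    (h2 : ∀ u v, u ≠ v → ∃ j₁ j₂, j₁ ≠ j₂ ∧ (G j₁).Adj u v ∧ (G j₂).Adj u v) :
    Injective f := by
  intro u v huv
  by_contra hne
  obtain ⟨j₁, j₂, hj, h₁, h₂⟩ := h2 u v hne
  rcases Fin.eq_castSucc_or_eq_last j₁ with ⟨i₁, rfl⟩ | rfl
  · exact hdiff i₁ u v h₁ (congrFun huv i₁)
  rcases Fin.eq_castSucc_or_eq_last j₂ with ⟨i₂, rfl⟩ | rfl
  · exact hdiff i₂ u v h₂ (congrFun huv i₂)
  · exact hj rfl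

theorem comap_hypercube_le_of_adj_castSucc {V : Type*} {n : ℕ} {G : Fin (n + 1) → SimpleGraph V}
    {f : V → Fin n → Bool} (hdiff : ∀ i u v, (G i.castSucc).Adj u v → f u i ≠ f v i)
    (h2 : ∀ u v, u ≠ v → ∃ j₁ j₂, j₁ ≠ j₂ ∧ (G j₁).Adj u v ∧ (G j₂).Adj u v) :
    (hypercube n).comap f ≤ G (Fin.last n) := by
  intro u v huv
  obtain ⟨j₁, j₂, hj, h₁, h₂⟩ := h2 u v huv.ne
  rcases Fin.eq_castSucc_or_eq_last j₁ with ⟨i₁, rfl⟩ | rfl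
  · rcases Fin.eq_castSucc_or_eq_last j₂ with ⟨i₂, rfl⟩ | rfl
    · have := two_le_hammingDist (fun h => hj (congrArg _ h)) (hdiff i₁ u v h₁) (hdiff i₂ u v h₂)
      simp only [comap_adj, hypercube] at huv
      omega
    · exact h₂
  · exact h₁

end SimpleGraph

open SimpleGraph

/-- Let `G₁,…,G_d` be simple graphs on `r` vertices, each a disjoint union of
complete bipartite graphs, such that every pair of distinct vertices is adjacent
in at least two of the graphs. If `c_d` is the number of connected components of
`G_d`, then `c_d + r ≤ 2^{d−1} + 1`, with equality only if `r = 2^{d−1}`. -/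
theorem stmt18 (d r : ℕ) (hd : 2 ≤ d)
    (G : Fin d → SimpleGraph (Fin r))
    (hbip : ∀ j, ∃ (C : Type) (c : Fin r → C) (s : Fin r → Bool),
      ∀ u v, (G j).Adj u v ↔ (c u = c v ∧ s u ≠ s v))
    (h2 : ∀ u v : Fin r, u ≠ v →
      ∃ j₁ j₂ : Fin d, j₁ ≠ j₂ ∧ (G j₁).Adj u v ∧ (G j₂).Adj u v)
    (cd : ℕ)
    (hcd : cd = Nat.card (G ⟨d - 1, by omega⟩).ConnectedComponent) :
    cd + r ≤ 2 ^ (d - 1) + 1 ∧ (cd + r = 2 ^ (d - 1) + 1 → r = 2 ^ (d - 1)) := by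
  obtain ⟨n, rfl⟩ : ∃ n, d = n + 1 := ⟨d - 1, by omega⟩
  choose _ _ s hs using hbip
  let f : Fin r → Fin n → Bool := fun u i => s i.castSucc u
  have hdiff : ∀ i u v, (G i.castSucc).Adj u v → f u i ≠ f v i :=
    fun i u v h => ((hs _ u v).1 h).2
  obtain ⟨h₁, h₂⟩ := card_connectedComponent_comap_hypercube_add_card_le
    (injective_of_adj_castSucc hdiff h2)
  have hle := ConnectedComponent.card_le_card_of_le (comap_hypercube_le_of_adj_castSucc hdiff h2)
  rw [Nat.card_fin] at h₁ h₂
  have hlast : (⟨n + 1 - 1, by omega⟩ : Fin (n + 1)) = Fin.last n := rfl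
  rw [hlast] at hcd
  simp only [Nat.add_sub_cancel]
  omega
end
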